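/- arXiv:1312.0030 — 10 statements merged into one kernel-verified Lean document; each statement's English description precedes it below -/
import Mathlib

section
/- Let T = ⟨v1,v2,v3⟩ be a nondegenerate triangle, d ≥ r ≥ 0 integers, and p(v) = ∑_{i+j+k=d} c_{ijk} B^d_{ijk}(v) a polynomial in Bézier form on T. Then all partial derivatives of p of order at most r vanish at v1 if and only if c_{ijk} = 0 for all (i,j,k) with i ≥ d − r. -/
open Finset

/-- The index set of all triples `(i,j,k)` of naturals with `i + j + k = d`. -/
def triIdx (d : ℕ) : Finset (ℕ × ℕ × ℕ) :=
  (Finset.range (d+1) ×ˢ Finset.range (d+1) ×ˢ Finset.range (d+1)).filter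
    (fun x => x.1 + x.2.1 + x.2.2 = d)

/-- The Bernstein basis polynomial of degree `d` and index `(i,j,k)`,
evaluated at barycentric coordinates `(x, y, z)`. -/
noncomputable def bern (d i j k : ℕ) (x y z : ℝ) : ℝ :=
  ((d.factorial : ℝ) / ((i.factorial : ℝ) * j.factorial * k.factorial)) *
    x ^ i * y ^ j * z ^ k

section Aux
universe u v
variable {E : Type u} [NormedAddCommGroup E] [NormedSpace ℝ E]
set_option maxHeartbeats 1000000
set_option synthInstance.maxHeartbeats 200000

lemma affine_contDiff (x : E) (L : E →L[ℝ] ℝ) :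
    ContDiff ℝ (⊤ : ℕ∞) (fun v : E => L (v - x)) :=
  L.contDiff.comp (contDiff_id.sub contDiff_const)

lemma contDiff_prodsmul (x : E) (s : Finset ℕ) (L : ℕ → E →L[ℝ] ℝ)
    {F : Type v} [NormedAddCommGroup F] [NormedSpace ℝ F] (g : E → F)
    (hg : ContDiff ℝ (⊤ : ℕ∞) g) :
    ContDiff ℝ (⊤ : ℕ∞) (fun v => (∏ i ∈ s, L i (v - x)) • g v) :=
  (contDiff_prod (fun i _ => affine_contDiff x (L i))).smul hg

lemma hasFDerivAt_prodsmul (x : E) (s : Finset ℕ) (L : ℕ → E →L[ℝ] ℝ)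
    {F : Type v} [NormedAddCommGroup F] [NormedSpace ℝ F] (g : E → F)
    (hg : ContDiff ℝ (⊤ : ℕ∞) g) (v : E) :
    HasFDerivAt (fun v => (∏ i ∈ s, L i (v - x)) • g v)
      ((∑ i ∈ s, (∏ j ∈ s.erase i, L j (v - x)) • ((L i).smulRight (g v)))
        + (∏ i ∈ s, L i (v - x)) • fderiv ℝ g v) v := by
  classical
  have hLi : ∀ i : ℕ, HasFDerivAt (fun v : E => L i (v - x)) (L i) v := by
    intro i
    have h1 : HasFDerivAt (fun v : E => v - x) (ContinuousLinearMap.id ℝ E) v := by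
      simpa using (hasFDerivAt_id v).sub_const x
    exact ((L i).hasFDerivAt.comp v h1)
  have hP : HasFDerivAt (fun v : E => ∏ i ∈ s, L i (v - x))
      (∑ i ∈ s, (∏ j ∈ s.erase i, L j (v - x)) • L i) v :=
    HasFDerivAt.finset_prod (fun i _ => hLi i)
  have hgd : HasFDerivAt g (fderiv ℝ g v) v :=
    (hg.differentiable (by simp)).differentiableAt.hasFDerivAt
  have h2 := HasFDerivAt.smul hP hgd
  convert h2 using 1
  · rfl
  ext z
  simp only [ContinuousLinearMap.add_apply, ContinuousLinearMap.sum_apply,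
    ContinuousLinearMap.smul_apply, ContinuousLinearMap.smulRight_apply,
    Finset.sum_smul, smul_smul, smul_eq_mul]
  exact add_comm _ _

lemma smulRight_contDiff {F : Type v} [NormedAddCommGroup F] [NormedSpace ℝ F]
    (L : E →L[ℝ] ℝ) (g : E → F) (hg : ContDiff ℝ (⊤ : ℕ∞) g) :
    ContDiff ℝ (⊤ : ℕ∞) (fun w => L.smulRight (g w)) :=
  (ContinuousLinearMap.smulRightL ℝ E F L).contDiff.comp hg

lemma iteratedFDeriv_prodsmul_zero (x : E) :
    ∀ (n : ℕ) (F : Type u) [NormedAddCommGroup F] [NormedSpace ℝ F]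
      (g : E → F), ContDiff ℝ (⊤ : ℕ∞) g → ∀ (s : Finset ℕ) (L : ℕ → E →L[ℝ] ℝ),
      n < s.card →
      iteratedFDeriv ℝ n (fun v => (∏ i ∈ s, L i (v - x)) • g v) x = 0 := by
  intro n
  induction n with
  | zero =>
    intro F _ _ g hg s L hn
    ext m
    obtain ⟨i, hi⟩ := Finset.card_pos.mp hn
    simp [Finset.prod_eq_zero hi]
  | succ n ih =>
    intro F _ _ g hg s L hn
    classical
    set A : E → (E →L[ℝ] F) := fun v =>
      ∑ i ∈ s, (∏ j ∈ s.erase i, L j (v - x)) • ((L i).smulRight (g v)) with hA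
    set B : E → (E →L[ℝ] F) := fun v =>
      (∏ i ∈ s, L i (v - x)) • fderiv ℝ g v with hB
    have hfd : (fderiv ℝ (fun v => (∏ i ∈ s, L i (v - x)) • g v)) = fun v => A v + B v := by
      funext v
      exact (hasFDerivAt_prodsmul x s L g hg v).fderiv
    have hAsm : ContDiff ℝ (⊤ : ℕ∞) A := by
      apply ContDiff.sum
      intro i hi
      exact contDiff_prodsmul x (s.erase i) L _ (smulRight_contDiff (L i) g hg)
    have hBsm : ContDiff ℝ (⊤ : ℕ∞) B :=
      contDiff_prodsmul x s L _ (hg.fderiv_right (mod_cast le_top))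
    have hA0 : iteratedFDeriv ℝ n A x = 0 := by
      have : iteratedFDeriv ℝ n A x = ∑ i ∈ s, iteratedFDeriv ℝ n
          (fun v => (∏ j ∈ s.erase i, L j (v - x)) • ((L i).smulRight (g v))) x := by
        rw [hA, iteratedFDeriv_sum]
        · simp
        · intro i hi
          exact (contDiff_prodsmul x (s.erase i) L _ (smulRight_contDiff (L i) g hg)).of_le (mod_cast le_top)
      rw [this]
      refine Finset.sum_eq_zero fun i hi => ?_
      refine ih _ _ (smulRight_contDiff (L i) g hg) _ L ?_
      rw [Finset.card_erase_of_mem hi]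
      omega
    have hB0 : iteratedFDeriv ℝ n B x = 0 :=
      ih _ _ (hg.fderiv_right (mod_cast le_top)) s L (by omega)
    have key : iteratedFDeriv ℝ n (fun v => A v + B v) x = 0 := by
      rw [iteratedFDeriv_add_apply' (hAsm.of_le (mod_cast le_top)).contDiffAt (hBsm.of_le (mod_cast le_top)).contDiffAt, hA0, hB0, add_zero]
    ext m
    rw [iteratedFDeriv_succ_apply_right]
    simp only [hfd, key]
    simp

lemma iteratedFDeriv_prodsmul_diag (x w : E) :
    ∀ (t : ℕ) (F : Type u) [NormedAddCommGroup F] [NormedSpace ℝ F]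
      (g : E → F), ContDiff ℝ (⊤ : ℕ∞) g → ∀ (s : Finset ℕ) (L : ℕ → E →L[ℝ] ℝ),
      s.card = t →
      iteratedFDeriv ℝ t (fun v => (∏ i ∈ s, L i (v - x)) • g v) x (fun _ => w)
        = (t.factorial) • ((∏ i ∈ s, L i w) • g x) := by
  intro t
  induction t with
  | zero =>
    intro F _ _ g hg s L hs
    rw [Finset.card_eq_zero] at hs
    subst hs
    simp
  | succ t ih =>
    intro F _ _ g hg s L hs
    classical
    set A : E → (E →L[ℝ] F) := fun v =>
      ∑ i ∈ s, (∏ j ∈ s.erase i, L j (v - x)) • ((L i).smulRight (g v)) with hA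
    set B : E → (E →L[ℝ] F) := fun v =>
      (∏ i ∈ s, L i (v - x)) • fderiv ℝ g v with hB
    have hfd : (fderiv ℝ (fun v => (∏ i ∈ s, L i (v - x)) • g v)) = fun v => A v + B v := by
      funext v
      exact (hasFDerivAt_prodsmul x s L g hg v).fderiv
    have hAsm : ContDiff ℝ (⊤ : ℕ∞) A := by
      apply ContDiff.sum
      intro i hi
      exact contDiff_prodsmul x (s.erase i) L _ (smulRight_contDiff (L i) g hg)
    have hBsm : ContDiff ℝ (⊤ : ℕ∞) B :=
      contDiff_prodsmul x s L _ (hg.fderiv_right (mod_cast le_top))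
    have hB0 : iteratedFDeriv ℝ t B x = 0 :=
      iteratedFDeriv_prodsmul_zero x t _ _ (hg.fderiv_right (mod_cast le_top)) s L (by omega)
    have hAx : iteratedFDeriv ℝ t A x = ∑ i ∈ s, iteratedFDeriv ℝ t
        (fun v => (∏ j ∈ s.erase i, L j (v - x)) • ((L i).smulRight (g v))) x := by
      rw [hA, iteratedFDeriv_sum]
      · simp
      · intro i hi
        exact (contDiff_prodsmul x (s.erase i) L _ (smulRight_contDiff (L i) g hg)).of_le (mod_cast le_top)
    rw [iteratedFDeriv_succ_apply_right]
    have hinit : Fin.init (fun _ : Fin (t+1) => w) = (fun _ : Fin t => w) := rfl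
    rw [hinit, hfd]
    rw [iteratedFDeriv_add_apply' (hAsm.of_le (mod_cast le_top)).contDiffAt (hBsm.of_le (mod_cast le_top)).contDiffAt, hAx, hB0]
    simp only [add_zero, ContinuousMultilinearMap.sum_apply, ContinuousLinearMap.coe_sum',
      Finset.sum_apply]
    have hterm : ∀ i ∈ s, (iteratedFDeriv ℝ t
        (fun v => (∏ j ∈ s.erase i, L j (v - x)) • ((L i).smulRight (g v))) x
        (fun _ => w)) w = (t.factorial) • ((∏ j ∈ s, L j w) • g x) := by
      intro i hi
      rw [ih _ _ (smulRight_contDiff (L i) g hg) (s.erase i) L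
        (by rw [Finset.card_erase_of_mem hi]; omega)]
      simp only [ContinuousLinearMap.smul_apply, ContinuousLinearMap.smulRight_apply,
        smul_smul]
      rw [← Finset.prod_erase_mul s (fun j => L j w) hi]
    rw [Finset.sum_congr rfl hterm, Finset.sum_const, hs, Nat.factorial_succ, mul_smul]


end Aux

set_option maxHeartbeats 2000000 in
theorem derivatives_vanish_iff_disk_coeffs_vanish
    (d r : ℕ) (hr : r ≤ d)
    (v1 v2 v3 : ℝ × ℝ) (hind : AffineIndependent ℝ ![v1, v2, v3])
    (b1 b2 b3 : ℝ × ℝ → ℝ)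
    (hb : ∀ v : ℝ × ℝ, b1 v + b2 v + b3 v = 1 ∧
      v = b1 v • v1 + b2 v • v2 + b3 v • v3)
    (c : ℕ → ℕ → ℕ → ℝ) (p : ℝ × ℝ → ℝ)
    (hp : ∀ v : ℝ × ℝ, p v =
      ∑ x ∈ triIdx d, c x.1 x.2.1 x.2.2 * bern d x.1 x.2.1 x.2.2 (b1 v) (b2 v) (b3 v)) :
    (∀ n : ℕ, n ≤ r → iteratedFDeriv ℝ n p v1 = 0) ↔
      (∀ i j k : ℕ, i + j + k = d → d - r ≤ i → c i j k = 0) := by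
  classical
  -- determinant
  set D : ℝ := (v2.1 - v1.1) * (v3.2 - v1.2) - (v2.2 - v1.2) * (v3.1 - v1.1) with hD
  have hδ : D ≠ 0 := by
    intro h0
    rw [hD] at h0
    have key : ∀ s t : ℝ, s • (v2 - v1) + t • (v3 - v1) = 0 → s = 0 ∧ t = 0 := by
      intro s t hst
      have hw' : -(s+t) • v1 + s • v2 + t • v3 = s • (v2 - v1) + t • (v3 - v1) := by module
      have h3 := affineIndependent_iff.mp hind Finset.univ ![-(s+t), s, t]
        (by simp [Fin.sum_univ_three]; try ring)
        (by rw [Fin.sum_univ_three]; simp only [Matrix.cons_val_zero, Matrix.cons_val_one,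
              Matrix.head_cons, Matrix.cons_val_two, Matrix.tail_cons]
            rw [hw', hst])
      exact ⟨by simpa using h3 1 (Finset.mem_univ _), by simpa using h3 2 (Finset.mem_univ _)⟩
    by_cases h1 : v3.2 - v1.2 = 0 ∧ v2.2 - v1.2 = 0
    · by_cases h2 : v3.1 - v1.1 = 0 ∧ v2.1 - v1.1 = 0
      · have hk := key 1 0 (by
          have hv2 : v2 - v1 = 0 := Prod.ext h2.2 h1.2
          simp [hv2])
        exact one_ne_zero hk.1
      · have hk := key (v3.1 - v1.1) (-(v2.1 - v1.1)) (by
          refine Prod.ext ?_ ?_ <;>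
            simp only [Prod.fst_add, Prod.snd_add, Prod.smul_fst, Prod.smul_snd,
              Prod.fst_sub, Prod.snd_sub, smul_eq_mul, Prod.fst_zero, Prod.snd_zero]
          · ring
          · rw [h1.1, h1.2]; ring)
        exact h2 ⟨hk.1, by linarith [hk.2]⟩
    · have hk := key (v3.2 - v1.2) (-(v2.2 - v1.2)) (by
        refine Prod.ext ?_ ?_ <;>
          simp only [Prod.fst_add, Prod.snd_add, Prod.smul_fst, Prod.smul_snd,
            Prod.fst_sub, Prod.snd_sub, smul_eq_mul, Prod.fst_zero, Prod.snd_zero]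
        · linear_combination h0
        · ring)
      exact h1 ⟨hk.1, by linarith [hk.2]⟩
  -- the two linear barycentric coordinate functionals
  set L2 : (ℝ × ℝ) →L[ℝ] ℝ := D⁻¹ • ((v3.2 - v1.2) • (ContinuousLinearMap.fst ℝ ℝ ℝ)
    - (v3.1 - v1.1) • (ContinuousLinearMap.snd ℝ ℝ ℝ)) with hL2def
  set L3 : (ℝ × ℝ) →L[ℝ] ℝ := D⁻¹ • ((v2.1 - v1.1) • (ContinuousLinearMap.snd ℝ ℝ ℝ)
    - (v2.2 - v1.2) • (ContinuousLinearMap.fst ℝ ℝ ℝ)) with hL3def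
  have hL2 : ∀ w : ℝ × ℝ, L2 w = (w.1 * (v3.2 - v1.2) - w.2 * (v3.1 - v1.1)) / D := by
    intro w
    have h : L2 w = D⁻¹ * ((v3.2 - v1.2) * w.1 - (v3.1 - v1.1) * w.2) := by
      rw [hL2def]; simp
    rw [h, div_eq_inv_mul]; try ring
  have hL3 : ∀ w : ℝ × ℝ, L3 w = ((v2.1 - v1.1) * w.2 - (v2.2 - v1.2) * w.1) / D := by
    intro w
    have h : L3 w = D⁻¹ * ((v2.1 - v1.1) * w.2 - (v2.2 - v1.2) * w.1) := by
      rw [hL3def]; simp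
    rw [h, div_eq_inv_mul]; try ring
  -- barycentric coordinates are given by these functionals
  have hcomp : ∀ v : ℝ × ℝ, (v.1 - v1.1 = b2 v * (v2.1 - v1.1) + b3 v * (v3.1 - v1.1)) ∧
      (v.2 - v1.2 = b2 v * (v2.2 - v1.2) + b3 v * (v3.2 - v1.2)) := by
    intro v
    obtain ⟨hs, hv⟩ := hb v
    have h1 := congrArg Prod.fst hv
    have h2 := congrArg Prod.snd hv
    simp only [Prod.fst_add, Prod.snd_add, Prod.smul_fst, Prod.smul_snd, smul_eq_mul] at h1 h2
    constructor
    · linear_combination h1 + v1.1 * hs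
    · linear_combination h2 + v1.2 * hs
  have hb2 : ∀ v, b2 v = L2 (v - v1) := by
    intro v
    obtain ⟨e1, e2⟩ := hcomp v
    rw [hL2 (v - v1)]
    have hf1 : (v - v1).1 = v.1 - v1.1 := rfl
    have hf2 : (v - v1).2 = v.2 - v1.2 := rfl
    rw [hf1, hf2, eq_div_iff hδ, hD]
    linear_combination (v3.1 - v1.1) * e2 - (v3.2 - v1.2) * e1
  have hb3 : ∀ v, b3 v = L3 (v - v1) := by
    intro v
    obtain ⟨e1, e2⟩ := hcomp v
    rw [hL3 (v - v1)]
    have hf1 : (v - v1).1 = v.1 - v1.1 := rfl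
    have hf2 : (v - v1).2 = v.2 - v1.2 := rfl
    rw [hf1, hf2, eq_div_iff hδ, hD]
    linear_combination (v2.2 - v1.2) * e1 - (v2.1 - v1.1) * e2
  have hb1 : ∀ v, b1 v = 1 - L2 (v - v1) - L3 (v - v1) := by
    intro v
    have h1 := (hb v).1
    rw [← hb2 v, ← hb3 v]
    linarith
  -- terms
  set T : ℕ × ℕ × ℕ → (ℝ × ℝ) → ℝ := fun X v =>
    c X.1 X.2.1 X.2.2 * bern d X.1 X.2.1 X.2.2 (b1 v) (b2 v) (b3 v) with hT
  set G : ℕ × ℕ × ℕ → (ℝ × ℝ) → ℝ := fun X v =>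
    (c X.1 X.2.1 X.2.2 * ((d.factorial : ℝ) /
      ((X.1.factorial : ℝ) * X.2.1.factorial * X.2.2.factorial))) *
      (1 - L2 (v - v1) - L3 (v - v1)) ^ X.1 with hG
  have hprodgen : ∀ (j k : ℕ) (z : ℝ × ℝ),
      (∏ l ∈ Finset.range (j + k), (if l < j then L2 else L3) z)
        = (L2 z) ^ j * (L3 z) ^ k := by
    intro j k z
    rw [Finset.prod_range_add]
    have h1 : ∀ l ∈ Finset.range j, (if l < j then L2 else L3) z = L2 z := by
      intro l hl; rw [if_pos (Finset.mem_range.mp hl)]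
    have h2 : ∀ l ∈ Finset.range k, (if j + l < j then L2 else L3) z = L3 z := by
      intro l hl; rw [if_neg (by omega)]
    rw [Finset.prod_congr rfl h1, Finset.prod_congr rfl h2, Finset.prod_const,
      Finset.prod_const, Finset.card_range, Finset.card_range]
  have hTset : ∀ X : ℕ × ℕ × ℕ, T X = fun v =>
      (∏ l ∈ Finset.range (X.2.1 + X.2.2), (if l < X.2.1 then L2 else L3) (v - v1)) •
        G X v := by
    intro X
    funext v
    rw [hT, hG]
    beta_reduce
    rw [hprodgen X.2.1 X.2.2 (v - v1), smul_eq_mul, ← hb1 v, ← hb2 v, ← hb3 v]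
    rw [bern]
    ring
  have hGsm : ∀ X, ContDiff ℝ (⊤ : ℕ∞) (G X) := by
    intro X
    rw [hG]
    exact contDiff_const.mul
      (((contDiff_const.sub (affine_contDiff v1 L2)).sub (affine_contDiff v1 L3)).pow _)
  have hTsm : ∀ X, ContDiff ℝ (⊤ : ℕ∞) (T X) := by
    intro X
    rw [hTset X]
    exact contDiff_prodsmul v1 _ _ _ (hGsm X)
  have hp' : p = fun v => ∑ X ∈ triIdx d, T X v := by
    funext v
    exact hp v
  have hsplit : ∀ n : ℕ, iteratedFDeriv ℝ n p v1
      = ∑ X ∈ triIdx d, iteratedFDeriv ℝ n (T X) v1 := by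
    intro n
    rw [hp', iteratedFDeriv_sum (fun X _ => (hTsm X).of_le (mod_cast le_top))]
    simp
  have hmem : ∀ X ∈ triIdx d, X.1 + X.2.1 + X.2.2 = d := fun X hX =>
    (Finset.mem_filter.mp hX).2
  have hmem' : ∀ i j k : ℕ, i + j + k = d → ((i, j, k) : ℕ × ℕ × ℕ) ∈ triIdx d := by
    intro i j k hijk
    simp only [triIdx, Finset.mem_filter, Finset.mem_product, Finset.mem_range]
    refine ⟨⟨?_, ?_, ?_⟩, ?_⟩ <;> omega
  constructor
  · intro hA i0 j0 k0 hijk0 hile0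
    have hm0 : j0 + k0 ≤ r := by omega
    suffices H : ∀ m : ℕ, m ≤ r → ∀ i j k : ℕ, i + j + k = d → j + k = m → c i j k = 0 by
      exact H (j0 + k0) hm0 i0 j0 k0 hijk0 rfl
    intro m
    induction m using Nat.strong_induction_on with
    | _ m IH =>
    intro hmr i j k hijk hjk
    have key : ∀ s t : ℝ, (∑ X ∈ triIdx d, (if X.2.1 + X.2.2 = m then
        (m.factorial : ℝ) * (c X.1 X.2.1 X.2.2 * ((d.factorial : ℝ) /
          ((X.1.factorial : ℝ) * X.2.1.factorial * X.2.2.factorial))) * s ^ X.2.1 * t ^ X.2.2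
        else 0)) = 0 := by
      intro s t
      set w : ℝ × ℝ := s • (v2 - v1) + t • (v3 - v1) with hwdef
      have hw1 : w.1 = s * (v2.1 - v1.1) + t * (v3.1 - v1.1) := by
        rw [hwdef]; simp
      have hw2 : w.2 = s * (v2.2 - v1.2) + t * (v3.2 - v1.2) := by
        rw [hwdef]; simp
      have hL2w : L2 w = s := by
        rw [hL2, hw1, hw2, div_eq_iff hδ, hD]; ring
      have hL3w : L3 w = t := by
        rw [hL3, hw1, hw2, div_eq_iff hδ, hD]; ring
      have h1 : (iteratedFDeriv ℝ m p v1) (fun _ => w) = 0 := by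
        rw [hA m hmr]
        exact ContinuousMultilinearMap.zero_apply _
      rw [hsplit m, ContinuousMultilinearMap.sum_apply] at h1
      refine Eq.trans (Finset.sum_congr rfl fun X hX => ?_) h1
      by_cases hXm : X.2.1 + X.2.2 = m
      · rw [if_pos hXm, hTset X,
          iteratedFDeriv_prodsmul_diag v1 w m ℝ (G X) (hGsm X)
            (Finset.range (X.2.1 + X.2.2)) (fun l => if l < X.2.1 then L2 else L3)
            (by rw [Finset.card_range, hXm]),
          hprodgen X.2.1 X.2.2 w, hL2w, hL3w]
        have hGv1 : G X v1 = c X.1 X.2.1 X.2.2 * ((d.factorial : ℝ) /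
            ((X.1.factorial : ℝ) * X.2.1.factorial * X.2.2.factorial)) := by
          rw [hG]
          beta_reduce
          rw [sub_self]
          simp
        rw [hGv1, ← Nat.cast_smul_eq_nsmul ℝ]
        simp only [smul_eq_mul]
        ring
      · rw [if_neg hXm]
        rcases Nat.lt_or_ge (X.2.1 + X.2.2) m with hlt | hgt
        · have hc0 : c X.1 X.2.1 X.2.2 = 0 :=
            IH _ hlt (by omega) _ _ _ (hmem X hX) rfl
          have hz : T X = fun _ => (0 : ℝ) := by
            funext v
            rw [hT]
            beta_reduce
            rw [hc0, zero_mul]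
          rw [hz]
          simp [iteratedFDeriv_zero_fun]
        · have hgt' : m < X.2.1 + X.2.2 := by omega
          rw [hTset X, iteratedFDeriv_prodsmul_zero v1 m ℝ (G X) (hGsm X)
            (Finset.range (X.2.1 + X.2.2)) (fun l => if l < X.2.1 then L2 else L3)
            (by rw [Finset.card_range]; omega)]
          simp
    -- polynomial coefficient extraction
    set Pl : Polynomial ℝ := ∑ X ∈ triIdx d, (if X.2.1 + X.2.2 = m then
        Polynomial.C ((m.factorial : ℝ) * (c X.1 X.2.1 X.2.2 * ((d.factorial : ℝ) /
          ((X.1.factorial : ℝ) * X.2.1.factorial * X.2.2.factorial)))) * Polynomial.X ^ X.2.1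
        else 0) with hPl
    have hev : ∀ s : ℝ, Pl.eval s = 0 := by
      intro s
      rw [hPl, Polynomial.eval_finset_sum, ← key s 1]
      refine Finset.sum_congr rfl fun X hX => ?_
      by_cases hXm : X.2.1 + X.2.2 = m
      · rw [if_pos hXm, if_pos hXm]
        simp [mul_assoc]
      · rw [if_neg hXm, if_neg hXm]
        simp
    have hP0 : Pl = 0 := Polynomial.funext fun s => by rw [hev s, Polynomial.eval_zero]
    have hco := congrArg (fun q : Polynomial ℝ => q.coeff j) hP0
    simp only [hPl, Polynomial.finset_sum_coeff, Polynomial.coeff_zero] at hco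
    have hform : ∀ X ∈ triIdx d, ((if X.2.1 + X.2.2 = m then
        Polynomial.C ((m.factorial : ℝ) * (c X.1 X.2.1 X.2.2 * ((d.factorial : ℝ) /
          ((X.1.factorial : ℝ) * X.2.1.factorial * X.2.2.factorial)))) * Polynomial.X ^ X.2.1
        else 0).coeff j)
        = if X = ((i, j, k) : ℕ × ℕ × ℕ) then ((m.factorial : ℝ) * (c i j k * ((d.factorial : ℝ) /
          ((i.factorial : ℝ) * j.factorial * k.factorial)))) else 0 := by
      intro X hX
      have hXd := hmem X hX
      by_cases h1 : X.2.1 + X.2.2 = m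
      · rw [if_pos h1, Polynomial.coeff_C_mul, Polynomial.coeff_X_pow]
        by_cases h2 : X.2.1 = j
        · have hXeq : X = ((i, j, k) : ℕ × ℕ × ℕ) := by
            have h3 : X.2.2 = k := by omega
            have h4 : X.1 = i := by omega
            exact Prod.ext h4 (Prod.ext h2 h3)
          rw [if_pos hXeq, if_pos (by omega : j = X.2.1), hXeq]
          simp
        · rw [if_neg (by omega : ¬ j = X.2.1), if_neg (by
            intro hC; rw [hC] at h2; exact h2 rfl)]
          simp
      · rw [if_neg h1, if_neg (by
          intro hC; rw [hC] at h1; exact h1 hjk), Polynomial.coeff_zero]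
    rw [Finset.sum_congr rfl hform, Finset.sum_ite_eq' (triIdx d) ((i, j, k) : ℕ × ℕ × ℕ),
      if_pos (hmem' i j k hijk)] at hco
    have hmf : (m.factorial : ℝ) ≠ 0 := by
      exact_mod_cast m.factorial_ne_zero
    have hfac : ((d.factorial : ℝ) / ((i.factorial : ℝ) * j.factorial * k.factorial)) ≠ 0 := by
      apply div_ne_zero
      · exact_mod_cast d.factorial_ne_zero
      · push_cast
        positivity
    rcases mul_eq_zero.mp hco with h | h
    · exact absurd h hmf
    · rcases mul_eq_zero.mp h with h' | h'
      · exact h'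
      · exact absurd h' hfac
  · -- coefficients vanish → derivatives vanish
    intro hc n hn
    rw [hsplit n]
    refine Finset.sum_eq_zero fun X hX => ?_
    rcases Nat.lt_or_ge X.1 (d - r) with hlt | hge
    · rw [hTset X]
      refine iteratedFDeriv_prodsmul_zero v1 n _ _ (hGsm X) _ _ ?_
      rw [Finset.card_range]
      have := hmem X hX
      omega
    · have hc0 : c X.1 X.2.1 X.2.2 = 0 := hc _ _ _ (hmem X hX) hge
      have hz : T X = fun _ => 0 := by
        funext v
        rw [hT]
        simp [hc0]
      rw [hz]
      exact (congrFun iteratedFDeriv_zero_fun v1).trans rfl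
end

section
/- Let g : ℝ → ℝ agree with a polynomial of degree at most 5 on (−∞, 1/2] and with a polynomial of degree at most 5 on [1/2, ∞), with g three times continuously differentiable at 1/2. If g(0) = g'(0) = g''(0) = g'''(0) = 0 and g(1) = g'(1) = g''(1) = g'''(1) = 0, then g vanishes identically on [0,1]. -/
open Polynomial Topology Filter

private lemma polyIteratedDeriv (P : Polynomial ℝ) (k : ℕ) :
    iteratedDeriv k (fun x => P.eval x) = fun x => (Polynomial.derivative^[k] P).eval x := by
  induction k generalizing P with
  | zero => simp
  | succ n ih =>
    rw [iteratedDeriv_succ']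
    have hd : deriv (fun x => P.eval x) = fun x => P.derivative.eval x :=
      funext fun x => P.deriv
    rw [hd, ih, Function.iterate_succ_apply]

private lemma myIteratedDerivWithin_of_isOpen {f : ℝ → ℝ} {s : Set ℝ} (hs : IsOpen s) {x : ℝ}
    (hx : x ∈ s) (n : ℕ) : iteratedDerivWithin n f s x = iteratedDeriv n f x := by
  rw [iteratedDerivWithin_eq_iteratedFDerivWithin, iteratedDeriv_eq_iteratedFDeriv,
    iteratedFDerivWithin_of_isOpen n hs hx]

private lemma quartic_factor (P : Polynomial ℝ) (a : ℝ) (hdeg : P.degree ≤ 5)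
    (h : ∀ k : ℕ, k ≤ 3 → (Polynomial.derivative^[k] P).eval a = 0) :
    ∃ c1 c0 : ℝ, P = (X - C a) ^ 4 * (C c1 * X + C c0) := by
  by_cases hP : P = 0
  · exact ⟨0, 0, by simp [hP]⟩
  have hlt : 3 < P.rootMultiplicity a :=
    (Polynomial.lt_rootMultiplicity_iff_isRoot_iterate_derivative hP).2 fun m hm => h m hm
  have hdvd : (X - C a) ^ 4 ∣ P := (Polynomial.le_rootMultiplicity_iff hP).1 hlt
  obtain ⟨r, hr⟩ := hdvd
  refine ⟨r.coeff 1, r.coeff 0, ?_⟩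
  have hdr : r.degree ≤ 1 := by
    rcases eq_or_ne r 0 with h0 | h0
    · simp [h0]
    have hd4 : ((X - C a) ^ 4 : Polynomial ℝ).degree = 4 := by
      rw [Polynomial.degree_pow, Polynomial.degree_X_sub_C]
      rfl
    have h5 := hdeg
    rw [hr, Polynomial.degree_mul, hd4, Polynomial.degree_eq_natDegree h0] at h5
    have h5' : (4 : ℕ) + r.natDegree ≤ 5 := by exact_mod_cast h5
    have : r.natDegree ≤ 1 := by omega
    rw [Polynomial.degree_eq_natDegree h0]
    exact_mod_cast this
  rw [hr, ← Polynomial.eq_X_add_C_of_degree_le_one hdr]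

theorem quintic_C3_spline_hermite_unique (g : ℝ → ℝ) (p q : Polynomial ℝ)
    (hp : p.degree ≤ 5) (hq : q.degree ≤ 5)
    (hgp : ∀ x : ℝ, x ≤ 1/2 → g x = p.eval x)
    (hgq : ∀ x : ℝ, 1/2 ≤ x → g x = q.eval x)
    (hc : ContDiffAt ℝ 3 g (1/2))
    (h0 : ∀ k : ℕ, k ≤ 3 → iteratedDeriv k g 0 = 0)
    (h1 : ∀ k : ℕ, k ≤ 3 → iteratedDeriv k g 1 = 0) :
    ∀ x ∈ Set.Icc (0:ℝ) 1, g x = 0 := by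
  -- iterated derivatives of g agree with those of p on (-∞, 1/2), with q on (1/2, ∞)
  have keyL : ∀ k : ℕ, ∀ x ∈ Set.Iio (1/2 : ℝ),
      iteratedDeriv k g x = (Polynomial.derivative^[k] p).eval x := by
    intro k x hx
    have h1 : Set.EqOn g (fun y => p.eval y) (Set.Iio (1/2 : ℝ)) := fun y hy => hgp y hy.le
    rw [h1.iteratedDeriv_of_isOpen isOpen_Iio k hx, polyIteratedDeriv]
  have keyR : ∀ k : ℕ, ∀ x ∈ Set.Ioi (1/2 : ℝ),
      iteratedDeriv k g x = (Polynomial.derivative^[k] q).eval x := by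
    intro k x hx
    have h1 : Set.EqOn g (fun y => q.eval y) (Set.Ioi (1/2 : ℝ)) := fun y hy => hgq y hy.le
    rw [h1.iteratedDeriv_of_isOpen isOpen_Ioi k hx, polyIteratedDeriv]
  have hp0 : ∀ k : ℕ, k ≤ 3 → (Polynomial.derivative^[k] p).eval 0 = 0 := by
    intro k hk
    rw [← keyL k 0 (by norm_num)]
    exact h0 k hk
  have hq1 : ∀ k : ℕ, k ≤ 3 → (Polynomial.derivative^[k] q).eval 1 = 0 := by
    intro k hk
    rw [← keyR k 1 (by norm_num)]
    exact h1 k hk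
  -- continuity of the iterated derivatives of g at 1/2
  have hcont : ∀ m : ℕ, m ≤ 3 → ContinuousAt (iteratedDeriv m g) (1/2 : ℝ) := by
    obtain ⟨u, hu, hcd⟩ := hc.contDiffOn le_rfl (by simp)
    intro m hm
    set s := interior u with hsdef
    have hs : IsOpen s := isOpen_interior
    have hxs : (1/2 : ℝ) ∈ s := mem_interior_iff_mem_nhds.2 hu
    have hcd' : ContDiffOn ℝ 3 g s := hcd.mono interior_subset
    have hco : ContinuousOn (iteratedDerivWithin m g s) s :=
      hcd'.continuousOn_iteratedDerivWithin (by exact_mod_cast hm) hs.uniqueDiffOn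
    refine (hco.continuousAt (hs.mem_nhds hxs)).congr ?_
    filter_upwards [hs.mem_nhds hxs] with y hy
    exact myIteratedDerivWithin_of_isOpen (f := g) hs hy m
  -- derivatives of p and q match at 1/2
  have hmid : ∀ k : ℕ, k ≤ 3 →
      (Polynomial.derivative^[k] p).eval (1/2) = (Polynomial.derivative^[k] q).eval (1/2) := by
    intro k hk
    have hck := hcont k hk
    have TL : Tendsto (iteratedDeriv k g) (𝓝[<] (1/2 : ℝ))
        (𝓝 ((Polynomial.derivative^[k] p).eval (1/2))) := by
      refine Filter.Tendsto.congr' ?_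
        (((Polynomial.continuous _).tendsto _).mono_left nhdsWithin_le_nhds)
      filter_upwards [self_mem_nhdsWithin] with y hy using (keyL k y hy).symm
    have TR : Tendsto (iteratedDeriv k g) (𝓝[>] (1/2 : ℝ))
        (𝓝 ((Polynomial.derivative^[k] q).eval (1/2))) := by
      refine Filter.Tendsto.congr' ?_
        (((Polynomial.continuous _).tendsto _).mono_left nhdsWithin_le_nhds)
      filter_upwards [self_mem_nhdsWithin] with y hy using (keyR k y hy).symm
    have TL' : Tendsto (iteratedDeriv k g) (𝓝[<] (1/2 : ℝ))
        (𝓝 (iteratedDeriv k g (1/2))) := hck.tendsto.mono_left nhdsWithin_le_nhds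
    have TR' : Tendsto (iteratedDeriv k g) (𝓝[>] (1/2 : ℝ))
        (𝓝 (iteratedDeriv k g (1/2))) := hck.tendsto.mono_left nhdsWithin_le_nhds
    rw [tendsto_nhds_unique TL TL', tendsto_nhds_unique TR TR']
  -- factorizations
  obtain ⟨a1, a0, hP⟩ := quartic_factor p 0 hp hp0
  obtain ⟨b1, b0, hQ⟩ := quartic_factor q 1 hq hq1
  have hpq : (p - q).degree ≤ 5 := (Polynomial.degree_sub_le p q).trans (max_le hp hq)
  have hpqd : ∀ k : ℕ, k ≤ 3 → (Polynomial.derivative^[k] (p - q)).eval (1/2) = 0 := by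
    intro k hk
    rw [Polynomial.iterate_derivative_sub, Polynomial.eval_sub, hmid k hk, sub_self]
  obtain ⟨c1, c0, hR⟩ := quartic_factor (p - q) (1/2) hpq hpqd
  -- evaluation identity
  have E : ∀ t : ℝ, (t - 0) ^ 4 * (a1 * t + a0) - (t - 1) ^ 4 * (b1 * t + b0)
      = (t - 1/2) ^ 4 * (c1 * t + c0) := by
    intro t
    have h := congrArg (Polynomial.eval t) hR
    rw [hP, hQ] at h
    simpa using h
  have e0 := E 0
  have e1 := E 1
  have eh := E (1/2)
  have e2 := E 2
  have em := E (-1)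
  have e3 := E 3
  norm_num at e0 e1 eh e2 em e3
  ring_nf at e0 e1 eh e2 em e3
  have ha1 : a1 = 0 := by linarith
  have ha0 : a0 = 0 := by linarith
  have hb1 : b1 = 0 := by linarith
  have hb0 : b0 = 0 := by linarith
  have hp' : p = 0 := by rw [hP, ha1, ha0]; simp
  have hq' : q = 0 := by rw [hQ, hb1, hb0]; simp
  intro x hx
  rcases le_or_gt x (1/2) with h | h
  · rw [hgp x h, hp']; simp
  · rw [hgq x h.le, hq']; simp
end

section
/- Let g : ℝ → ℝ agree with a polynomial of degree at most 4 on (−∞, 1/2] and with a polynomial of degree at most 4 on [1/2, ∞), with g twice continuously differentiable at 1/2. If g(0) = g'(0) = g''(0) = 0, g(1) = g'(1) = g''(1) = 0, and g(1/2) = 0, then g vanishes identically on [0,1]. -/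
set_option maxHeartbeats 800000

open Polynomial Set

private lemma poly_iteratedDeriv (n : ℕ) (p : Polynomial ℝ) :
    iteratedDeriv n (fun x => p.eval x) =
      fun x => ((Polynomial.derivative)^[n] p).eval x := by
  induction n with
  | zero => simp
  | succ n ih =>
      rw [iteratedDeriv_succ, ih]
      funext x
      rw [Function.iterate_succ_apply']
      exact Polynomial.deriv _

private lemma deriv_left (f : ℝ → ℝ) (r : Polynomial ℝ) (c : ℝ)
    (hf : ∀ x ≤ c, f x = r.eval x) (hd : DifferentiableAt ℝ f c) :
    deriv f c = r.derivative.eval c :=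
  (uniqueDiffOn_Iic c c Set.self_mem_Iic).eq_deriv _
    hd.hasDerivAt.hasDerivWithinAt
    ((r.hasDerivAt c).hasDerivWithinAt.congr (fun x hx => hf x hx) (hf c le_rfl))

private lemma deriv_right (f : ℝ → ℝ) (r : Polynomial ℝ) (c : ℝ)
    (hf : ∀ x, c ≤ x → f x = r.eval x) (hd : DifferentiableAt ℝ f c) :
    deriv f c = r.derivative.eval c :=
  (uniqueDiffOn_Ici c c Set.self_mem_Ici).eq_deriv _
    hd.hasDerivAt.hasDerivWithinAt
    ((r.hasDerivAt c).hasDerivWithinAt.congr (fun x hx => hf x hx) (hf c le_rfl))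

theorem quartic_C2_spline_unique (g : ℝ → ℝ) (p q : Polynomial ℝ)
    (hp : p.degree ≤ 4) (hq : q.degree ≤ 4)
    (hgp : ∀ x : ℝ, x ≤ 1/2 → g x = p.eval x)
    (hgq : ∀ x : ℝ, 1/2 ≤ x → g x = q.eval x)
    (hc : ContDiffAt ℝ 2 g (1/2))
    (h0 : ∀ k : ℕ, k ≤ 2 → iteratedDeriv k g 0 = 0)
    (h1 : ∀ k : ℕ, k ≤ 2 → iteratedDeriv k g 1 = 0)
    (hm : g (1/2) = 0) :
    ∀ x ∈ Set.Icc (0:ℝ) 1, g x = 0 := by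
  -- g agrees with p near 0, with q near 1
  have hg0 : g =ᶠ[nhds (0:ℝ)] fun x => p.eval x := by
    filter_upwards [Iio_mem_nhds (by norm_num : (0:ℝ) < 1/2)] with x hx
    exact hgp x hx.le
  have hg1 : g =ᶠ[nhds (1:ℝ)] fun x => q.eval x := by
    filter_upwards [Ioi_mem_nhds (by norm_num : (1/2:ℝ) < 1)] with x hx
    exact hgq x hx.le
  have hp0 : ∀ k : ℕ, k ≤ 2 → ((Polynomial.derivative)^[k] p).eval 0 = 0 := by
    intro k hk
    have := (hg0.iteratedDeriv_eq k).symm.trans (h0 k hk)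
    rwa [poly_iteratedDeriv] at this
  have hq1 : ∀ k : ℕ, k ≤ 2 → ((Polynomial.derivative)^[k] q).eval 1 = 0 := by
    intro k hk
    have := (hg1.iteratedDeriv_eq k).symm.trans (h1 k hk)
    rwa [poly_iteratedDeriv] at this
  -- values at midpoint
  have hpm : p.eval (1/2) = 0 := (hgp (1/2) le_rfl).symm.trans hm
  have hqm : q.eval (1/2) = 0 := (hgq (1/2) le_rfl).symm.trans hm
  -- first derivative match at midpoint
  have hdg : DifferentiableAt ℝ g (1/2) := hc.differentiableAt two_ne_zero
  have hd1p : deriv g (1/2) = p.derivative.eval (1/2) :=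
    deriv_left g p (1/2) (fun x hx => hgp x hx) hdg
  have hd1q : deriv g (1/2) = q.derivative.eval (1/2) :=
    deriv_right g q (1/2) (fun x hx => hgq x hx) hdg
  have hder1 : p.derivative.eval (1/2) = q.derivative.eval (1/2) := hd1p ▸ hd1q
  -- deriv g agrees with derivative polynomials on half-lines
  have hDp : ∀ x : ℝ, x ≤ 1/2 → deriv g x = p.derivative.eval x := by
    intro x hx
    rcases lt_or_eq_of_le hx with hx' | hx'
    · have hev : g =ᶠ[nhds x] fun y => p.eval y := by
        filter_upwards [Iio_mem_nhds hx'] with y hy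
        exact hgp y hy.le
      rw [hev.deriv_eq]
      exact Polynomial.deriv p
    · rw [hx']; exact hd1p
  have hDq : ∀ x : ℝ, 1/2 ≤ x → deriv g x = q.derivative.eval x := by
    intro x hx
    rcases lt_or_eq_of_le hx with hx' | hx'
    · have hev : g =ᶠ[nhds x] fun y => q.eval y := by
        filter_upwards [Ioi_mem_nhds hx'] with y hy
        exact hgq y hy.le
      rw [hev.deriv_eq]
      exact Polynomial.deriv q
    · rw [← hx']; exact hd1q
  -- deriv g is differentiable at 1/2
  have hdd : DifferentiableAt ℝ (deriv g) (1/2) := by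
    have h1' : ContDiffAt ℝ 1 (fderiv ℝ g) (1/2) := hc.fderiv_right le_rfl
    have h2' : DifferentiableAt ℝ (fderiv ℝ g) (1/2) := h1'.differentiableAt one_ne_zero
    have : DifferentiableAt ℝ (fun x => (fderiv ℝ g x) 1) (1/2) :=
      h2'.clm_apply (differentiableAt_const _)
    exact this
  -- second derivative match at midpoint
  have hd2p : deriv (deriv g) (1/2) = p.derivative.derivative.eval (1/2) :=
    deriv_left (deriv g) p.derivative (1/2) hDp hdd
  have hd2q : deriv (deriv g) (1/2) = q.derivative.derivative.eval (1/2) :=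
    deriv_right (deriv g) q.derivative (1/2) hDq hdd
  have hder2 : p.derivative.derivative.eval (1/2) = q.derivative.derivative.eval (1/2) :=
    hd2p ▸ hd2q
  -- now pure algebra on coefficients
  have hpnd : p.natDegree < 5 :=
    Nat.lt_succ_of_le (Polynomial.natDegree_le_of_degree_le (by exact_mod_cast hp))
  have hqnd : q.natDegree < 5 :=
    Nat.lt_succ_of_le (Polynomial.natDegree_le_of_degree_le (by exact_mod_cast hq))
  have hpnd1 : p.derivative.natDegree < 5 :=
    lt_of_le_of_lt ((Polynomial.natDegree_derivative_le p).trans (Nat.sub_le _ _)) hpnd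
  have hqnd1 : q.derivative.natDegree < 5 :=
    lt_of_le_of_lt ((Polynomial.natDegree_derivative_le q).trans (Nat.sub_le _ _)) hqnd
  have hpnd2 : p.derivative.derivative.natDegree < 5 :=
    lt_of_le_of_lt ((Polynomial.natDegree_derivative_le _).trans (Nat.sub_le _ _)) hpnd1
  have hqnd2 : q.derivative.derivative.natDegree < 5 :=
    lt_of_le_of_lt ((Polynomial.natDegree_derivative_le _).trans (Nat.sub_le _ _)) hqnd1
  set a0 := p.coeff 0; set a1 := p.coeff 1; set a2 := p.coeff 2
  set a3 := p.coeff 3; set a4 := p.coeff 4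
  set b0 := q.coeff 0; set b1 := q.coeff 1; set b2 := q.coeff 2
  set b3 := q.coeff 3; set b4 := q.coeff 4
  have h5p : p.coeff 5 = 0 := Polynomial.coeff_eq_zero_of_natDegree_lt hpnd
  have h6p : p.coeff 6 = 0 := Polynomial.coeff_eq_zero_of_natDegree_lt (hpnd.trans (by norm_num))
  have h5q : q.coeff 5 = 0 := Polynomial.coeff_eq_zero_of_natDegree_lt hqnd
  have h6q : q.coeff 6 = 0 := Polynomial.coeff_eq_zero_of_natDegree_lt (hqnd.trans (by norm_num))
  have ep : ∀ x : ℝ, p.eval x = a0 + a1*x + a2*x^2 + a3*x^3 + a4*x^4 := by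
    intro x
    rw [Polynomial.eval_eq_sum_range' hpnd x]
    simp [Finset.sum_range_succ]; try ring
  have eq' : ∀ x : ℝ, q.eval x = b0 + b1*x + b2*x^2 + b3*x^3 + b4*x^4 := by
    intro x
    rw [Polynomial.eval_eq_sum_range' hqnd x]
    simp [Finset.sum_range_succ]; try ring
  have ep1 : ∀ x : ℝ, p.derivative.eval x = a1 + 2*a2*x + 3*a3*x^2 + 4*a4*x^3 := by
    intro x
    rw [Polynomial.eval_eq_sum_range' hpnd1 x]
    simp [Finset.sum_range_succ, Polynomial.coeff_derivative, h5p, h6p, h5q, h6q]; try ring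
  have eq1 : ∀ x : ℝ, q.derivative.eval x = b1 + 2*b2*x + 3*b3*x^2 + 4*b4*x^3 := by
    intro x
    rw [Polynomial.eval_eq_sum_range' hqnd1 x]
    simp [Finset.sum_range_succ, Polynomial.coeff_derivative, h5p, h6p, h5q, h6q]; try ring
  have ep2 : ∀ x : ℝ, p.derivative.derivative.eval x = 2*a2 + 6*a3*x + 12*a4*x^2 := by
    intro x
    rw [Polynomial.eval_eq_sum_range' hpnd2 x]
    simp [Finset.sum_range_succ, Polynomial.coeff_derivative, h5p, h6p, h5q, h6q]; try ring
  have eq2 : ∀ x : ℝ, q.derivative.derivative.eval x = 2*b2 + 6*b3*x + 12*b4*x^2 := by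
    intro x
    rw [Polynomial.eval_eq_sum_range' hqnd2 x]
    simp [Finset.sum_range_succ, Polynomial.coeff_derivative, h5p, h6p, h5q, h6q]; try ring
  -- extract the ten linear equations
  have E1 : a0 = 0 := by have := hp0 0 (by norm_num); simp only [Function.iterate_zero, id_eq] at this; rw [ep 0] at this; linarith [this]
  have E2 : a1 = 0 := by
    have := hp0 1 (by norm_num); simp only [Function.iterate_one] at this
    rw [ep1 0] at this; linarith
  have E3 : (2:ℝ)*a2 = 0 := by
    have := hp0 2 (by norm_num)
    rw [show (Polynomial.derivative)^[2] p = p.derivative.derivative by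
      rw [Function.iterate_succ_apply', Function.iterate_one]] at this
    rw [ep2 0] at this; linarith
  have E4 : a0 + a1*(1/2) + a2*(1/4) + a3*(1/8) + a4*(1/16) = 0 := by
    rw [ep (1/2)] at hpm; norm_num at hpm ⊢; linarith
  have F1 : b0 + b1 + b2 + b3 + b4 = 0 := by
    have := hq1 0 (by norm_num); simp only [Function.iterate_zero, id_eq] at this; rw [eq' 1] at this; linarith
  have F2 : b1 + 2*b2 + 3*b3 + 4*b4 = 0 := by
    have := hq1 1 (by norm_num); simp only [Function.iterate_one] at this
    rw [eq1 1] at this; linarith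
  have F3 : 2*b2 + 6*b3 + 12*b4 = 0 := by
    have := hq1 2 (by norm_num)
    rw [show (Polynomial.derivative)^[2] q = q.derivative.derivative by
      rw [Function.iterate_succ_apply', Function.iterate_one]] at this
    rw [eq2 1] at this; linarith
  have F4 : b0 + b1*(1/2) + b2*(1/4) + b3*(1/8) + b4*(1/16) = 0 := by
    rw [eq' (1/2)] at hqm; norm_num at hqm ⊢; linarith
  have M1 : a1 + a2 + (3/4)*a3 + (1/2)*a4 = b1 + b2 + (3/4)*b3 + (1/2)*b4 := by
    rw [ep1 (1/2), eq1 (1/2)] at hder1; norm_num at hder1 ⊢; linarith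
  have M2 : 2*a2 + 3*a3 + 3*a4 = 2*b2 + 3*b3 + 3*b4 := by
    rw [ep2 (1/2), eq2 (1/2)] at hder2; norm_num at hder2 ⊢; linarith
  -- solve the linear system
  have ha2 : a2 = 0 := by linarith
  have ha3 : a3 = -a4/2 := by linarith
  -- from E4: a3/8 + a4/16 = 0  → 2 a3 + a4 = 0
  have hE4' : 2*a3 + a4 = 0 := by linarith
  have hb : b2 = 0 ∧ b3 = 0 ∧ b4 = 0 ∧ b1 = 0 ∧ b0 = 0 ∧ a3 = 0 ∧ a4 = 0 := by
    constructor; · linarith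
    constructor; · linarith
    constructor; · linarith
    constructor; · linarith
    constructor; · linarith
    constructor; · linarith
    linarith
  obtain ⟨hb2, hb3, hb4, hb1, hb0, ha3', ha4⟩ := hb
  -- conclude
  intro x hx
  rcases le_or_gt x (1/2) with h | h
  · rw [hgp x h, ep x, E1, E2, ha2, ha3', ha4]; ring
  · rw [hgq x h.le, eq' x, hb0, hb1, hb2, hb3, hb4]; ring
end

section
/- Let g : ℝ → ℝ agree with a polynomial of degree at most 3 on (−∞, 1/2] and with a polynomial of degree at most 3 on [1/2, ∞), with g continuously differentiable at 1/2. If g(0) = g'(0) = 0, g(1) = g'(1) = 0, and g(1/4) = g(3/4) = 0, then g vanishes identically on [0,1]. -/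
open Polynomial Set

theorem cubic_C1_spline_unique (g : ℝ → ℝ) (p q : Polynomial ℝ)
    (hp : p.degree ≤ 3) (hq : q.degree ≤ 3)
    (hgp : ∀ x : ℝ, x ≤ 1/2 → g x = p.eval x)
    (hgq : ∀ x : ℝ, 1/2 ≤ x → g x = q.eval x)
    (hc : ContDiffAt ℝ 1 g (1/2))
    (h0 : g 0 = 0) (h0' : deriv g 0 = 0)
    (h1 : g 1 = 0) (h1' : deriv g 1 = 0)
    (hq1 : g (1/4) = 0) (hq3 : g (3/4) = 0) :
    ∀ x ∈ Set.Icc (0:ℝ) 1, g x = 0 := by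
  have hp4 : p.natDegree < 4 := by
    have : p.natDegree ≤ 3 := Polynomial.natDegree_le_of_degree_le (by exact_mod_cast hp); omega
  have hq4 : q.natDegree < 4 := by
    have : q.natDegree ≤ 3 := Polynomial.natDegree_le_of_degree_le (by exact_mod_cast hq); omega
  have hpe : ∀ x : ℝ, p.eval x =
      p.coeff 0 + p.coeff 1 * x + p.coeff 2 * x^2 + p.coeff 3 * x^3 := by
    intro x
    rw [Polynomial.eval_eq_sum_range' hp4]
    simp [Finset.sum_range_succ]
  have hqe : ∀ x : ℝ, q.eval x =
      q.coeff 0 + q.coeff 1 * x + q.coeff 2 * x^2 + q.coeff 3 * x^3 := by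
    intro x
    rw [Polynomial.eval_eq_sum_range' hq4]
    simp [Finset.sum_range_succ]
  have hpd4 : (Polynomial.derivative p).natDegree < 4 :=
    lt_of_le_of_lt (Polynomial.natDegree_derivative_le p) (by omega)
  have hqd4 : (Polynomial.derivative q).natDegree < 4 :=
    lt_of_le_of_lt (Polynomial.natDegree_derivative_le q) (by omega)
  have hpc4 : p.coeff 4 = 0 := Polynomial.coeff_eq_zero_of_natDegree_lt (by omega)
  have hqc4 : q.coeff 4 = 0 := Polynomial.coeff_eq_zero_of_natDegree_lt (by omega)
  have hpde : ∀ x : ℝ, (Polynomial.derivative p).eval x =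
      p.coeff 1 + 2 * p.coeff 2 * x + 3 * p.coeff 3 * x^2 := by
    intro x
    rw [Polynomial.eval_eq_sum_range' hpd4]
    simp [Finset.sum_range_succ, Polynomial.coeff_derivative, hpc4]
    ring
  have hqde : ∀ x : ℝ, (Polynomial.derivative q).eval x =
      q.coeff 1 + 2 * q.coeff 2 * x + 3 * q.coeff 3 * x^2 := by
    intro x
    rw [Polynomial.eval_eq_sum_range' hqd4]
    simp [Finset.sum_range_succ, Polynomial.coeff_derivative, hqc4]
    ring
  -- deriv of g at 0 equals p' at 0
  have hg_p : g =ᶠ[nhds (0:ℝ)] fun x => p.eval x := by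
    filter_upwards [Iio_mem_nhds (show (0:ℝ) < 1/2 by norm_num)] with x hx
    exact hgp x hx.le
  have e2 : p.coeff 1 = 0 := by
    have := hg_p.deriv_eq
    rw [h0'] at this
    have h := (Polynomial.deriv (x := (0:ℝ)) (p := p)).symm.trans this.symm
    rw [hpde] at h
    linarith [h]
  have hg_q : g =ᶠ[nhds (1:ℝ)] fun x => q.eval x := by
    filter_upwards [Ioi_mem_nhds (show (1/2:ℝ) < 1 by norm_num)] with x hx
    exact hgq x hx.le
  have e5 : q.coeff 1 + 2 * q.coeff 2 + 3 * q.coeff 3 = 0 := by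
    have := hg_q.deriv_eq
    rw [h1'] at this
    have h := (Polynomial.deriv (x := (1:ℝ)) (p := q)).symm.trans this.symm
    rw [hqde] at h
    linarith [h]
  -- value equations
  have e1 : p.coeff 0 = 0 := by
    have := (hgp 0 (by norm_num)).symm.trans h0
    rw [hpe] at this; linarith
  have e3 : p.coeff 0 + p.coeff 1 * (1/4) + p.coeff 2 * (1/16) + p.coeff 3 * (1/64) = 0 := by
    have := (hgp (1/4) (by norm_num)).symm.trans hq1
    rw [hpe] at this; norm_num at this; linarith
  have e4 : q.coeff 0 + q.coeff 1 + q.coeff 2 + q.coeff 3 = 0 := by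
    have := (hgq 1 (by norm_num)).symm.trans h1
    rw [hqe] at this; norm_num at this; linarith
  have e6 : q.coeff 0 + q.coeff 1 * (3/4) + q.coeff 2 * (9/16) + q.coeff 3 * (27/64) = 0 := by
    have := (hgq (3/4) (by norm_num)).symm.trans hq3
    rw [hqe] at this; norm_num at this; linarith
  have e7 : p.coeff 0 + p.coeff 1 * (1/2) + p.coeff 2 * (1/4) + p.coeff 3 * (1/8)
      = q.coeff 0 + q.coeff 1 * (1/2) + q.coeff 2 * (1/4) + q.coeff 3 * (1/8) := by
    have h := (hgp (1/2) le_rfl).symm.trans (hgq (1/2) le_rfl)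
    rw [hpe, hqe] at h; norm_num at h; linarith
  -- derivative matching at 1/2
  have hd : HasDerivAt g (deriv g (1/2)) (1/2) :=
    (hc.differentiableAt one_ne_zero).hasDerivAt
  have hleft : HasDerivWithinAt g ((Polynomial.derivative p).eval (1/2)) (Iic (1/2)) (1/2) := by
    refine ((p.hasDerivAt (1/2)).hasDerivWithinAt).congr ?_ ?_
    · intro x hx; exact hgp x hx
    · exact hgp _ le_rfl
  have hright : HasDerivWithinAt g ((Polynomial.derivative q).eval (1/2)) (Ici (1/2)) (1/2) := by
    refine ((q.hasDerivAt (1/2)).hasDerivWithinAt).congr ?_ ?_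
    · intro x hx; exact hgq x hx
    · exact hgq _ le_rfl
  have hLu : (Polynomial.derivative p).eval (1/2 : ℝ) = deriv g (1/2) := by
    have h1 := hleft.derivWithin (uniqueDiffOn_Iic (1/2 : ℝ) _ Set.self_mem_Iic)
    have h2 := hd.hasDerivWithinAt.derivWithin (uniqueDiffOn_Iic (1/2 : ℝ) _ Set.self_mem_Iic)
    rw [← h1, ← h2]
  have hRu : (Polynomial.derivative q).eval (1/2 : ℝ) = deriv g (1/2) := by
    have h1 := hright.derivWithin (uniqueDiffOn_Ici (1/2 : ℝ) _ Set.self_mem_Ici)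
    have h2 := hd.hasDerivWithinAt.derivWithin (uniqueDiffOn_Ici (1/2 : ℝ) _ Set.self_mem_Ici)
    rw [← h1, ← h2]
  have e8 : p.coeff 1 + 2 * p.coeff 2 * (1/2) + 3 * p.coeff 3 * (1/4)
      = q.coeff 1 + 2 * q.coeff 2 * (1/2) + 3 * q.coeff 3 * (1/4) := by
    have h := hLu.trans hRu.symm
    rw [hpde, hqde] at h; norm_num at h; linarith
  -- solve linear system
  have hc2 : p.coeff 2 = 0 := by linarith
  have hc3 : p.coeff 3 = 0 := by linarith
  have hd0 : q.coeff 0 = 0 := by linarith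
  have hd1 : q.coeff 1 = 0 := by linarith
  have hd2 : q.coeff 2 = 0 := by linarith
  have hd3 : q.coeff 3 = 0 := by linarith
  intro x hx
  rcases le_total x (1/2) with h | h
  · rw [hgp x h, hpe, e1, e2, hc2, hc3]; ring
  · rw [hgq x h, hqe, hd0, hd1, hd2, hd3]; ring
end

section
/- Let g : ℝ → ℝ agree with a polynomial of degree at most 5 on (−∞, 1/2] and with a polynomial of degree at most 5 on [1/2, ∞), and be three times continuously differentiable at 1/2. Then g(1/2) = (1/2)(g(0)+g(1)) + (7/40)(g'(0)−g'(1)) + (1/40)(g''(0)+g''(1)) + (1/640)(g'''(0)−g'''(1)). -/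
open Polynomial Filter Topology Set

lemma aux_polyIter (k : ℕ) (p : Polynomial ℝ) :
    iteratedDeriv k (fun x => p.eval x) = fun x => (derivative^[k] p).eval x := by
  induction k generalizing p with
  | zero => simp
  | succ n ih =>
    rw [iteratedDeriv_succ', show deriv (fun x => p.eval x) = fun x => p.derivative.eval x
      from funext fun x => Polynomial.deriv p, ih, Function.iterate_succ_apply]

lemma aux_evalIter (r : Polynomial ℝ) (hr : r.natDegree ≤ 5) (k : ℕ) (x : ℝ) :
    (derivative^[k] r).eval x
      = ∑ i ∈ Finset.range 6, ((i+k).descFactorial k : ℝ) * r.coeff (i+k) * x^i := by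
  rw [Polynomial.eval_eq_sum_range'
    (lt_of_le_of_lt ((natDegree_iterate_derivative r k).trans (by omega)) (by norm_num : 5 < 6))]
  exact Finset.sum_congr rfl fun i _ => by rw [coeff_iterate_derivative, nsmul_eq_mul]

lemma aux_quintic_rule (p q : Polynomial ℝ) (hp : p.natDegree ≤ 5) (hq : q.natDegree ≤ 5)
    (h0 : p.eval (1/2:ℝ) = q.eval (1/2))
    (h1 : (derivative p).eval (1/2:ℝ) = (derivative q).eval (1/2))
    (h2 : (derivative^[2] p).eval (1/2:ℝ) = (derivative^[2] q).eval (1/2))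
    (h3 : (derivative^[3] p).eval (1/2:ℝ) = (derivative^[3] q).eval (1/2)) :
    q.eval (1/2:ℝ) = (1/2) * (p.eval 0 + q.eval 1)
      + (7/40) * ((derivative p).eval 0 - (derivative q).eval 1)
      + (1/40) * ((derivative^[2] p).eval 0 + (derivative^[2] q).eval 1)
      + (1/640) * ((derivative^[3] p).eval 0 - (derivative^[3] q).eval 1) := by
  have hp6 : p.coeff 6 = 0 := p.coeff_eq_zero_of_natDegree_lt (by omega)
  have hp7 : p.coeff 7 = 0 := p.coeff_eq_zero_of_natDegree_lt (by omega)
  have hp8 : p.coeff 8 = 0 := p.coeff_eq_zero_of_natDegree_lt (by omega)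
  have hq6 : q.coeff 6 = 0 := q.coeff_eq_zero_of_natDegree_lt (by omega)
  have hq7 : q.coeff 7 = 0 := q.coeff_eq_zero_of_natDegree_lt (by omega)
  have hq8 : q.coeff 8 = 0 := q.coeff_eq_zero_of_natDegree_lt (by omega)
  have e0p := aux_evalIter p hp 0
  have e1p := aux_evalIter p hp 1
  have e2p := aux_evalIter p hp 2
  have e3p := aux_evalIter p hp 3
  have e0q := aux_evalIter q hq 0
  have e1q := aux_evalIter q hq 1
  have e2q := aux_evalIter q hq 2
  have e3q := aux_evalIter q hq 3
  simp only [Function.iterate_zero_apply, Function.iterate_one] at *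
  simp only [e0p, e1p, e2p, e3p, e0q, e1q, e2q, e3q] at h0 h1 h2 h3 ⊢
  simp only [Finset.sum_range_succ, Finset.sum_range_zero, hp6, hp7, hp8, hq6, hq7, hq8] at *
  norm_num at h0 h1 h2 h3 ⊢
  linarith

lemma aux_match (g : ℝ → ℝ) (p q : Polynomial ℝ)
    (hgp : ∀ x : ℝ, x ≤ 1/2 → g x = p.eval x)
    (hgq : ∀ x : ℝ, 1/2 ≤ x → g x = q.eval x)
    (hc : ContDiffAt ℝ 3 g (1/2)) :
    ∀ k : ℕ, k ≤ 3 → (derivative^[k] p).eval (1/2:ℝ) = (derivative^[k] q).eval (1/2) := by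
  obtain ⟨u, hu, hcd⟩ := hc.contDiffOn (le_refl _) (by simp)
  set U := interior u with hUdef
  have hUo : IsOpen U := isOpen_interior
  have hU2 : (1/2:ℝ) ∈ U := mem_interior_iff_mem_nhds.mpr hu
  have hcdU : ContDiffOn ℝ 3 g U := hcd.mono interior_subset
  intro k hk
  have hcont : ContinuousAt (iteratedDeriv k g) (1/2:ℝ) := by
    have h1 : ContinuousOn (iteratedDerivWithin k g U) U :=
      hcdU.continuousOn_iteratedDerivWithin (by exact_mod_cast hk) hUo.uniqueDiffOn
    have h2 : Set.EqOn (iteratedDeriv k g) (iteratedDerivWithin k g U) U := by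
      intro x hx
      rw [iteratedDerivWithin_eq_iteratedFDerivWithin, iteratedFDerivWithin_of_isOpen k hUo hx,
        iteratedDeriv_eq_iteratedFDeriv]
    exact ((h1.congr h2).continuousAt (hUo.mem_nhds hU2))
  have hpe : ∀ x : ℝ, x < 1/2 → iteratedDeriv k g x = (derivative^[k] p).eval x := by
    intro x hx
    have hev : g =ᶠ[𝓝 x] fun y => p.eval y := by
      filter_upwards [Iio_mem_nhds hx] with y hy using hgp y hy.le
    rw [hev.iteratedDeriv_eq, aux_polyIter]
  have hqe : ∀ x : ℝ, 1/2 < x → iteratedDeriv k g x = (derivative^[k] q).eval x := by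
    intro x hx
    have hev : g =ᶠ[𝓝 x] fun y => q.eval y := by
      filter_upwards [Ioi_mem_nhds hx] with y hy using hgq y hy.le
    rw [hev.iteratedDeriv_eq, aux_polyIter]
  have hlp : Tendsto (iteratedDeriv k g) (𝓝[<] (1/2:ℝ)) (𝓝 ((derivative^[k] p).eval (1/2))) := by
    have : Tendsto (fun x => (derivative^[k] p).eval x) (𝓝[<] (1/2:ℝ))
        (𝓝 ((derivative^[k] p).eval (1/2))) :=
      ((derivative^[k] p).continuous.tendsto _).mono_left nhdsWithin_le_nhds
    refine this.congr' ?_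
    filter_upwards [self_mem_nhdsWithin] with x hx using (hpe x hx).symm
  have hlq : Tendsto (iteratedDeriv k g) (𝓝[>] (1/2:ℝ)) (𝓝 ((derivative^[k] q).eval (1/2))) := by
    have : Tendsto (fun x => (derivative^[k] q).eval x) (𝓝[>] (1/2:ℝ))
        (𝓝 ((derivative^[k] q).eval (1/2))) :=
      ((derivative^[k] q).continuous.tendsto _).mono_left nhdsWithin_le_nhds
    refine this.congr' ?_
    filter_upwards [self_mem_nhdsWithin] with x hx using (hqe x hx).symm
  have h1 : (derivative^[k] p).eval (1/2:ℝ) = iteratedDeriv k g (1/2) :=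
    tendsto_nhds_unique hlp (hcont.tendsto.mono_left nhdsWithin_le_nhds)
  have h2 : (derivative^[k] q).eval (1/2:ℝ) = iteratedDeriv k g (1/2) :=
    tendsto_nhds_unique hlq (hcont.tendsto.mono_left nhdsWithin_le_nhds)
  rw [h1, h2]

theorem midpoint_value_rule (g : ℝ → ℝ) (p q : Polynomial ℝ)
    (hp : p.degree ≤ 5) (hq : q.degree ≤ 5)
    (hgp : ∀ x : ℝ, x ≤ 1/2 → g x = p.eval x)
    (hgq : ∀ x : ℝ, 1/2 ≤ x → g x = q.eval x)
    (hc : ContDiffAt ℝ 3 g (1/2)) :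
    g (1/2) = (1/2) * (g 0 + g 1) + (7/40) * (deriv g 0 - deriv g 1) + (1/40) * (iteratedDeriv 2 g 0 + iteratedDeriv 2 g 1) + (1/640) * (iteratedDeriv 3 g 0 - iteratedDeriv 3 g 1) := by
  have hmatch := aux_match g p q hgp hgq hc
  have hpn : p.natDegree ≤ 5 := Polynomial.natDegree_le_iff_degree_le.mpr hp
  have hqn : q.natDegree ≤ 5 := Polynomial.natDegree_le_iff_degree_le.mpr hq
  have hev0 : g =ᶠ[𝓝 (0:ℝ)] fun y => p.eval y := by
    filter_upwards [Iio_mem_nhds (by norm_num : (0:ℝ) < 1/2)] with y hy using hgp y hy.le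
  have hev1 : g =ᶠ[𝓝 (1:ℝ)] fun y => q.eval y := by
    filter_upwards [Ioi_mem_nhds (by norm_num : (1/2:ℝ) < 1)] with y hy using hgq y hy.le
  have hg0 : g 0 = p.eval 0 := hgp 0 (by norm_num)
  have hg1 : g 1 = q.eval 1 := hgq 1 (by norm_num)
  have hd0 : deriv g 0 = (derivative p).eval 0 := by
    rw [hev0.deriv_eq, Polynomial.deriv]
  have hd1 : deriv g 1 = (derivative q).eval 1 := by
    rw [hev1.deriv_eq, Polynomial.deriv]
  have hd20 : iteratedDeriv 2 g 0 = (derivative^[2] p).eval 0 := by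
    rw [hev0.iteratedDeriv_eq, aux_polyIter]
  have hd21 : iteratedDeriv 2 g 1 = (derivative^[2] q).eval 1 := by
    rw [hev1.iteratedDeriv_eq, aux_polyIter]
  have hd30 : iteratedDeriv 3 g 0 = (derivative^[3] p).eval 0 := by
    rw [hev0.iteratedDeriv_eq, aux_polyIter]
  have hd31 : iteratedDeriv 3 g 1 = (derivative^[3] q).eval 1 := by
    rw [hev1.iteratedDeriv_eq, aux_polyIter]
  have hg12 : g (1/2) = q.eval (1/2) := hgq (1/2) le_rfl
  rw [hg12, hg0, hg1, hd0, hd1, hd20, hd21, hd30, hd31]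
  exact aux_quintic_rule p q hpn hqn
    (by simpa using hmatch 0 (by norm_num))
    (by simpa using hmatch 1 (by norm_num))
    (hmatch 2 (by norm_num)) (hmatch 3 (by norm_num))
end

section
/- Let g : ℝ → ℝ agree with a polynomial of degree at most 5 on (−∞, 1/2] and with a polynomial of degree at most 5 on [1/2, ∞), and be three times continuously differentiable at 1/2. Then g'(1/2) = −(5/2)(g(0)−g(1)) − (3/4)(g'(0)+g'(1)) − (3/32)(g''(0)−g''(1)) − (1/192)(g'''(0)+g'''(1)). -/
open Polynomial Filter Set Topology

lemma polyIter (p : Polynomial ℝ) (n : ℕ) :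
    iteratedDeriv n (fun x => p.eval x) = fun x => (Polynomial.derivative^[n] p).eval x := by
  induction n with
  | zero => simp
  | succ n ih =>
    rw [iteratedDeriv_succ, ih]
    funext x
    rw [Function.iterate_succ_apply', Polynomial.deriv]

lemma left_eq (f h : ℝ → ℝ) (a : ℝ) (hf : ContinuousAt f a) (hh : ContinuousAt h a)
    (he : ∀ x < a, f x = h x) : f a = h a := by
  have h1 : Tendsto f (𝓝[<] a) (𝓝 (f a)) := hf.tendsto.mono_left nhdsWithin_le_nhds
  have h2 : Tendsto f (𝓝[<] a) (𝓝 (h a)) :=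
    (hh.tendsto.mono_left nhdsWithin_le_nhds).congr'
      (eventually_nhdsWithin_of_forall fun x hx => (he x hx).symm)
  exact tendsto_nhds_unique h1 h2

lemma right_eq (f h : ℝ → ℝ) (a : ℝ) (hf : ContinuousAt f a) (hh : ContinuousAt h a)
    (he : ∀ x, a < x → f x = h x) : f a = h a := by
  have h1 : Tendsto f (𝓝[>] a) (𝓝 (f a)) := hf.tendsto.mono_left nhdsWithin_le_nhds
  have h2 : Tendsto f (𝓝[>] a) (𝓝 (h a)) :=
    (hh.tendsto.mono_left nhdsWithin_le_nhds).congr'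
      (eventually_nhdsWithin_of_forall fun x hx => (he x hx).symm)
  exact tendsto_nhds_unique h1 h2

lemma contAt_iter (g : ℝ → ℝ) (a : ℝ) (hc : ContDiffAt ℝ 3 g a) (k : ℕ) (hk : k ≤ 3) :
    ContinuousAt (iteratedDeriv k g) a := by
  obtain ⟨u, hu, hgu⟩ := hc.contDiffOn le_rfl (by simp)
  have hv : IsOpen (interior u) := isOpen_interior
  have hmem : a ∈ interior u := mem_interior_iff_mem_nhds.2 hu
  have hgv : ContDiffOn ℝ 3 g (interior u) := hgu.mono interior_subset
  have hC : ContinuousOn (iteratedDerivWithin k g (interior u)) (interior u) :=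
    hgv.continuousOn_iteratedDerivWithin (by exact_mod_cast hk) hv.uniqueDiffOn
  have heq : EqOn (iteratedDeriv k g) (iteratedDerivWithin k g (interior u)) (interior u) := by
    intro x hx
    rw [iteratedDerivWithin_eq_iteratedFDerivWithin, iteratedDeriv_eq_iteratedFDeriv,
      iteratedFDerivWithin_of_isOpen k hv hx]
  exact (hC.congr heq).continuousAt (hv.mem_nhds hmem)

lemma ev0 (r : Polynomial ℝ) (h : r.natDegree < 6) (x : ℝ) :
    r.eval x = r.coeff 0 + r.coeff 1 * x + r.coeff 2 * x^2 + r.coeff 3 * x^3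
      + r.coeff 4 * x^4 + r.coeff 5 * x^5 := by
  conv_lhs => rw [r.as_sum_range' 6 h]
  simp [Finset.sum_range_succ, eval_monomial]

lemma ev1 (r : Polynomial ℝ) (h : r.natDegree < 6) (x : ℝ) :
    (Polynomial.derivative r).eval x = r.coeff 1 + 2 * r.coeff 2 * x + 3 * r.coeff 3 * x^2
      + 4 * r.coeff 4 * x^3 + 5 * r.coeff 5 * x^4 := by
  conv_lhs => rw [r.as_sum_range' 6 h]
  simp [derivative_monomial, Finset.sum_range_succ, eval_monomial]
  ring

lemma ev2 (r : Polynomial ℝ) (h : r.natDegree < 6) (x : ℝ) :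
    (Polynomial.derivative^[2] r).eval x = 2 * r.coeff 2 + 6 * r.coeff 3 * x
      + 12 * r.coeff 4 * x^2 + 20 * r.coeff 5 * x^3 := by
  conv_lhs => rw [r.as_sum_range' 6 h]
  simp [Function.iterate_succ_apply, derivative_monomial, Finset.sum_range_succ, eval_monomial]
  ring

lemma ev3 (r : Polynomial ℝ) (h : r.natDegree < 6) (x : ℝ) :
    (Polynomial.derivative^[3] r).eval x = 6 * r.coeff 3 + 24 * r.coeff 4 * x
      + 60 * r.coeff 5 * x^2 := by
  conv_lhs => rw [r.as_sum_range' 6 h]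
  simp [Function.iterate_succ_apply, derivative_monomial, Finset.sum_range_succ, eval_monomial]
  ring

theorem midpoint_first_derivative_rule (g : ℝ → ℝ) (p q : Polynomial ℝ)
    (hp : p.degree ≤ 5) (hq : q.degree ≤ 5)
    (hgp : ∀ x : ℝ, x ≤ 1/2 → g x = p.eval x)
    (hgq : ∀ x : ℝ, 1/2 ≤ x → g x = q.eval x)
    (hc : ContDiffAt ℝ 3 g (1/2)) :
    deriv g (1/2) = -(5/2) * (g 0 - g 1) - (3/4) * (deriv g 0 + deriv g 1) - (3/32) * (iteratedDeriv 2 g 0 - iteratedDeriv 2 g 1) - (1/192) * (iteratedDeriv 3 g 0 + iteratedDeriv 3 g 1) := by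
  have hnp : p.natDegree < 6 := by
    have h5 : p.natDegree ≤ 5 := Polynomial.natDegree_le_of_degree_le hp; omega
  have hnq : q.natDegree < 6 := by
    have h5 : q.natDegree ≤ 5 := Polynomial.natDegree_le_of_degree_le hq; omega
  have hleft : ∀ x < (1/2:ℝ), ∀ k : ℕ,
      iteratedDeriv k g x = (Polynomial.derivative^[k] p).eval x := by
    intro x hx k
    have h' : iteratedDeriv k (fun y => p.eval y) x = (Polynomial.derivative^[k] p).eval x := by
      rw [polyIter]
    rw [← h']
    apply Filter.EventuallyEq.iteratedDeriv_eq
    filter_upwards [Iio_mem_nhds hx] with y hy using hgp y (le_of_lt hy)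
  have hright : ∀ x : ℝ, (1/2:ℝ) < x → ∀ k : ℕ,
      iteratedDeriv k g x = (Polynomial.derivative^[k] q).eval x := by
    intro x hx k
    have h' : iteratedDeriv k (fun y => q.eval y) x = (Polynomial.derivative^[k] q).eval x := by
      rw [polyIter]
    rw [← h']
    apply Filter.EventuallyEq.iteratedDeriv_eq
    filter_upwards [Ioi_mem_nhds hx] with y hy using hgq y (le_of_lt hy)
  have hpolyC : ∀ (r : Polynomial ℝ) (k : ℕ),
      ContinuousAt (fun x => (Polynomial.derivative^[k] r).eval x) (1/2 : ℝ) :=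
    fun r k => (Polynomial.continuous _).continuousAt
  have hmidP : ∀ k : ℕ, k ≤ 3 →
      iteratedDeriv k g (1/2) = (Polynomial.derivative^[k] p).eval (1/2) := by
    intro k hk
    exact left_eq _ _ _ (contAt_iter g _ hc k hk) (hpolyC p k) (fun x hx => hleft x hx k)
  have hmidQ : ∀ k : ℕ, k ≤ 3 →
      iteratedDeriv k g (1/2) = (Polynomial.derivative^[k] q).eval (1/2) := by
    intro k hk
    exact right_eq _ _ _ (contAt_iter g _ hc k hk) (hpolyC q k) (fun x hx => hright x hx k)
  -- matching conditions at 1/2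
  have m0 : p.eval (1/2 : ℝ) = q.eval (1/2) := by
    have := (hmidP 0 (by norm_num)).symm.trans (hmidQ 0 (by norm_num)); simpa using this
  have m1 : (Polynomial.derivative p).eval (1/2 : ℝ) = (Polynomial.derivative q).eval (1/2) := by
    have := (hmidP 1 (by norm_num)).symm.trans (hmidQ 1 (by norm_num)); simpa using this
  have m2 : (Polynomial.derivative^[2] p).eval (1/2 : ℝ)
      = (Polynomial.derivative^[2] q).eval (1/2) :=
    (hmidP 2 (by norm_num)).symm.trans (hmidQ 2 (by norm_num))
  have m3 : (Polynomial.derivative^[3] p).eval (1/2 : ℝ)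
      = (Polynomial.derivative^[3] q).eval (1/2) :=
    (hmidP 3 (by norm_num)).symm.trans (hmidQ 3 (by norm_num))
  -- values in the goal
  have v0 : g 0 = p.eval 0 := hgp 0 (by norm_num)
  have v1 : g 1 = q.eval 1 := hgq 1 (by norm_num)
  have d0 : deriv g 0 = (Polynomial.derivative p).eval 0 := by
    have := hleft 0 (by norm_num) 1
    rwa [iteratedDeriv_one, Function.iterate_one] at this
  have d1 : deriv g 1 = (Polynomial.derivative q).eval 1 := by
    have := hright 1 (by norm_num) 1
    rwa [iteratedDeriv_one, Function.iterate_one] at this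
  have s0 : iteratedDeriv 2 g 0 = (Polynomial.derivative^[2] p).eval 0 := hleft 0 (by norm_num) 2
  have s1 : iteratedDeriv 2 g 1 = (Polynomial.derivative^[2] q).eval 1 := hright 1 (by norm_num) 2
  have t0 : iteratedDeriv 3 g 0 = (Polynomial.derivative^[3] p).eval 0 := hleft 0 (by norm_num) 3
  have t1 : iteratedDeriv 3 g 1 = (Polynomial.derivative^[3] q).eval 1 := hright 1 (by norm_num) 3
  have dm : deriv g (1/2) = (Polynomial.derivative p).eval (1/2) := by
    have := hmidP 1 (by norm_num)
    rwa [iteratedDeriv_one, Function.iterate_one] at this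
  rw [dm, v0, v1, d0, d1, s0, s1, t0, t1]
  simp only [ev0 p hnp, ev0 q hnq, ev1 p hnp, ev1 q hnq, ev2 p hnp, ev2 q hnq,
    ev3 p hnp, ev3 q hnq] at m0 m1 m2 m3 ⊢
  norm_num at m0 m1 m2 m3 ⊢
  linarith [m0, m1, m2, m3]
end

section
/- Let g : ℝ → ℝ agree with a polynomial of degree at most 5 on (−∞, 1/2] and with a polynomial of degree at most 5 on [1/2, ∞), and be three times continuously differentiable at 1/2. Then g''(1/2) = −2(g'(0)−g'(1)) − (1/2)(g''(0)+g''(1)) − (1/24)(g'''(0)−g'''(1)). -/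
open Polynomial Set Filter

private lemma natDeg_d1 {p : Polynomial ℝ} (h : p.natDegree < 6) :
    p.derivative.natDegree < 5 :=
  lt_of_le_of_lt (Polynomial.natDegree_derivative_le p) (by omega)

private lemma eval_d1 {p : Polynomial ℝ} (h : p.natDegree < 6) (x : ℝ) :
    p.derivative.eval x = p.coeff 1 + 2*p.coeff 2*x + 3*p.coeff 3*x^2
      + 4*p.coeff 4*x^3 + 5*p.coeff 5*x^4 := by
  rw [Polynomial.eval_eq_sum_range' (natDeg_d1 h) x]
  simp [Finset.sum_range_succ, Polynomial.coeff_derivative]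
  ring

private lemma eval_d2 {p : Polynomial ℝ} (h : p.natDegree < 6) (x : ℝ) :
    p.derivative.derivative.eval x = 2*p.coeff 2 + 6*p.coeff 3*x
      + 12*p.coeff 4*x^2 + 20*p.coeff 5*x^3 := by
  have h2 : p.derivative.derivative.natDegree < 4 := by
    have h1 := Polynomial.natDegree_derivative_le p
    have h2 := Polynomial.natDegree_derivative_le p.derivative
    omega
  rw [Polynomial.eval_eq_sum_range' h2 x]
  simp [Finset.sum_range_succ, Polynomial.coeff_derivative]
  ring

private lemma eval_d3 {p : Polynomial ℝ} (h : p.natDegree < 6) (x : ℝ) :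
    p.derivative.derivative.derivative.eval x = 6*p.coeff 3 + 24*p.coeff 4*x
      + 60*p.coeff 5*x^2 := by
  have h3 : p.derivative.derivative.derivative.natDegree < 3 := by
    have := Polynomial.natDegree_derivative_le p
    have := Polynomial.natDegree_derivative_le p.derivative
    have := Polynomial.natDegree_derivative_le p.derivative.derivative
    omega
  rw [Polynomial.eval_eq_sum_range' h3 x]
  simp [Finset.sum_range_succ, Polynomial.coeff_derivative]
  ring

private lemma poly_identity {p q : Polynomial ℝ} (hp : p.natDegree < 6) (hq : q.natDegree < 6)
    (e1 : p.derivative.eval (1/2) = q.derivative.eval (1/2))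
    (e2 : p.derivative.derivative.eval (1/2) = q.derivative.derivative.eval (1/2))
    (e3 : p.derivative.derivative.derivative.eval (1/2)
        = q.derivative.derivative.derivative.eval (1/2)) :
    p.derivative.derivative.eval (1/2) =
      -2 * (p.derivative.eval 0 - q.derivative.eval 1)
      - (1/2) * (p.derivative.derivative.eval 0 + q.derivative.derivative.eval 1)
      - (1/24) * (p.derivative.derivative.derivative.eval 0
          - q.derivative.derivative.derivative.eval 1) := by
  simp only [eval_d1 hp, eval_d1 hq, eval_d2 hp, eval_d2 hq, eval_d3 hp, eval_d3 hq] at e1 e2 e3 ⊢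
  linear_combination 2*e1 + (1/2)*e2 + (1/24)*e3

private lemma contDiffAt_deriv {f : ℝ → ℝ} {x : ℝ} {n : ℕ}
    (h : ContDiffAt ℝ (n+1) f x) : ContDiffAt ℝ n (deriv f) x := by
  obtain ⟨u, hu, hcd⟩ := h.contDiffOn le_rfl (by simp)
  have h1 : ContDiffOn ℝ (n+1) f (interior u) := hcd.mono interior_subset
  have h2 : ContDiffOn ℝ n (deriv f) (interior u) := by
    apply h1.deriv_of_isOpen isOpen_interior
    exact_mod_cast le_rfl
  exact h2.contDiffAt (interior_mem_nhds.mpr hu)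

private lemma deriv_eqOn_left {f : ℝ → ℝ} {P : Polynomial ℝ} {a : ℝ}
    (hf : DifferentiableAt ℝ f a) (h : ∀ x ≤ a, f x = P.eval x) :
    ∀ x ≤ a, deriv f x = P.derivative.eval x := by
  intro x hx
  rcases hx.lt_or_eq with hlt | rfl
  · have hev : f =ᶠ[nhds x] fun y => P.eval y :=
      eventually_of_mem (Iio_mem_nhds hlt) (fun y hy => h y (le_of_lt hy))
    rw [hev.deriv_eq, Polynomial.deriv]
  · have hu : UniqueDiffWithinAt ℝ (Iic x) x := uniqueDiffOn_Iic x x Set.self_mem_Iic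
    have h1 : derivWithin f (Iic x) x = deriv f x := hf.derivWithin hu
    have h2 : derivWithin f (Iic x) x = derivWithin (fun y => P.eval y) (Iic x) x :=
      derivWithin_congr (fun y hy => h y hy) (h x le_rfl)
    rw [← h1, h2, P.derivWithin hu]

private lemma deriv_eqOn_right {f : ℝ → ℝ} {P : Polynomial ℝ} {a : ℝ}
    (hf : DifferentiableAt ℝ f a) (h : ∀ x, a ≤ x → f x = P.eval x) :
    ∀ x, a ≤ x → deriv f x = P.derivative.eval x := by
  intro x hx
  rcases hx.lt_or_eq with hlt | rfl
  · have hev : f =ᶠ[nhds x] fun y => P.eval y :=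
      eventually_of_mem (Ioi_mem_nhds hlt) (fun y hy => h y (le_of_lt hy))
    rw [hev.deriv_eq, Polynomial.deriv]
  · have hu : UniqueDiffWithinAt ℝ (Ici a) a := uniqueDiffOn_Ici a a Set.self_mem_Ici
    have h1 : derivWithin f (Ici a) a = deriv f a := hf.derivWithin hu
    have h2 : derivWithin f (Ici a) a = derivWithin (fun y => P.eval y) (Ici a) a :=
      derivWithin_congr (fun y hy => h y hy) (h a le_rfl)
    rw [← h1, h2, P.derivWithin hu]

theorem midpoint_second_derivative_rule (g : ℝ → ℝ) (p q : Polynomial ℝ)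
    (hp : p.degree ≤ 5) (hq : q.degree ≤ 5)
    (hgp : ∀ x : ℝ, x ≤ 1/2 → g x = p.eval x)
    (hgq : ∀ x : ℝ, 1/2 ≤ x → g x = q.eval x)
    (hc : ContDiffAt ℝ 3 g (1/2)) :
    iteratedDeriv 2 g (1/2) = -2 * (deriv g 0 - deriv g 1) - (1/2) * (iteratedDeriv 2 g 0 + iteratedDeriv 2 g 1) - (1/24) * (iteratedDeriv 3 g 0 - iteratedDeriv 3 g 1) := by
  have hc' : ContDiffAt ℝ ((2:ℕ)+1) g (1/2) := by exact_mod_cast hc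
  have hd0 : DifferentiableAt ℝ g (1/2) := hc'.differentiableAt (by norm_num)
  have dp1 := deriv_eqOn_left hd0 hgp
  have dq1 := deriv_eqOn_right hd0 hgq
  have hc1 : ContDiffAt ℝ ((1:ℕ)+1) (deriv g) (1/2) := contDiffAt_deriv hc'
  have hd1 : DifferentiableAt ℝ (deriv g) (1/2) := hc1.differentiableAt (by norm_num)
  have dp2 := deriv_eqOn_left hd1 dp1
  have dq2 := deriv_eqOn_right hd1 dq1
  have hc2 : ContDiffAt ℝ ((0:ℕ)+1) (deriv (deriv g)) (1/2) := contDiffAt_deriv hc1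
  have hd2 : DifferentiableAt ℝ (deriv (deriv g)) (1/2) := hc2.differentiableAt (by norm_num)
  have dp3 := deriv_eqOn_left hd2 dp2
  have dq3 := deriv_eqOn_right hd2 dq2
  have e1 : p.derivative.eval (1/2) = q.derivative.eval (1/2) := by
    rw [← dp1 _ le_rfl, ← dq1 _ le_rfl]
  have e2 : p.derivative.derivative.eval (1/2) = q.derivative.derivative.eval (1/2) := by
    rw [← dp2 _ le_rfl, ← dq2 _ le_rfl]
  have e3 : p.derivative.derivative.derivative.eval (1/2)
      = q.derivative.derivative.derivative.eval (1/2) := by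
    rw [← dp3 _ le_rfl, ← dq3 _ le_rfl]
  have hpn : p.natDegree < 6 := by
    have := Polynomial.natDegree_le_of_degree_le (p := p) (n := 5) (by exact_mod_cast hp); omega
  have hqn : q.natDegree < 6 := by
    have := Polynomial.natDegree_le_of_degree_le (p := q) (n := 5) (by exact_mod_cast hq); omega
  have h2g : iteratedDeriv 2 g = deriv (deriv g) := by
    rw [iteratedDeriv_succ, iteratedDeriv_one]
  have h3g : iteratedDeriv 3 g = deriv (deriv (deriv g)) := by
    rw [iteratedDeriv_succ, h2g]
  rw [h2g, h3g, dp2 _ le_rfl, dp1 0 (by norm_num), dq1 1 (by norm_num),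
    dp2 0 (by norm_num), dq2 1 (by norm_num), dp3 0 (by norm_num), dq3 1 (by norm_num)]
  exact poly_identity hpn hqn e1 e2 e3
end

section
/- For every univariate polynomial q of degree at most 4: q(1/2) = (1/2)(q(0)+q(1)) + (5/32)(q'(0)−q'(1)) + (1/64)(q''(0)+q''(1)). -/
theorem quartic_midpoint_value_rule (q : Polynomial ℝ) (hq : q.degree ≤ 4) :
    q.eval (1/2) = (1/2) * (q.eval 0 + q.eval 1)
      + (5/32) * (q.derivative.eval 0 - q.derivative.eval 1)
      + (1/64) * (q.derivative.derivative.eval 0 + q.derivative.derivative.eval 1) := by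
  have hnd : q.natDegree < 5 :=
    Nat.lt_succ_of_le (Polynomial.natDegree_le_iff_degree_le.mpr hq)
  have h := q.as_sum_range' 5 hnd
  rw [h]
  simp [Finset.sum_range_succ, Polynomial.derivative_pow]
  ring
end

section
/- For every univariate polynomial q of degree at most 4: q'(1/2) = −2(q(0)−q(1)) − (1/2)(q'(0)+q'(1)) − (1/24)(q''(0)−q''(1)). -/
theorem quartic_midpoint_derivative_rule (q : Polynomial ℝ) (hq : q.degree ≤ 4) :
    q.derivative.eval (1/2) = -2 * (q.eval 0 - q.eval 1)
      - (1/2) * (q.derivative.eval 0 + q.derivative.eval 1)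
      - (1/24) * (q.derivative.derivative.eval 0 - q.derivative.derivative.eval 1) := by
  have h4 : q.natDegree ≤ 4 := Polynomial.natDegree_le_iff_degree_le.mpr hq
  have h5 : q.natDegree < 5 := by omega
  have hd : q.derivative.natDegree < 5 := by
    have := Polynomial.natDegree_derivative_le q; omega
  have hdd : q.derivative.derivative.natDegree < 5 := by
    have := Polynomial.natDegree_derivative_le q.derivative; omega
  have c5 : q.coeff 5 = 0 := Polynomial.coeff_eq_zero_of_natDegree_lt (by omega)
  have c6 : q.coeff 6 = 0 := Polynomial.coeff_eq_zero_of_natDegree_lt (by omega)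
  rw [Polynomial.eval_eq_sum_range' h5, Polynomial.eval_eq_sum_range' h5,
    Polynomial.eval_eq_sum_range' hd, Polynomial.eval_eq_sum_range' hd,
    Polynomial.eval_eq_sum_range' hd,
    Polynomial.eval_eq_sum_range' hdd, Polynomial.eval_eq_sum_range' hdd]
  simp [Finset.sum_range_succ, Polynomial.coeff_derivative, c5, c6]
  ring
end

section
/- Let f : ℝ² → ℝ be a polynomial of total degree at most 5, let A, B, C ∈ ℝ² be the vertices of a triangle, let t = B − A and m = (A+B)/2 − C, and write M = (A+B)/2 for the midpoint of the edge ⟨A,B⟩. Denote iterated directional derivatives by superscripts, e.g. f^{tm}(P) = ∇_t ∇_m f(P). Then ∇_m∇_m∇_m f(M) = 45(f(A)+f(B)) + 18(f^t(A)−f^t(B)) − 21(f^m(A)+f^m(B)) + (45/16)(f^{tt}(A)+f^{tt}(B)) − (63/8)(f^{tm}(A)−f^{tm}(B)) + (15/4)(f^{mm}(A)+f^{mm}(B)) + (3/16)(f^{ttt}(A)−f^{ttt}(B)) − (7/8)(f^{ttm}(A)+f^{ttm}(B)) + (5/4)(f^{tmm}(A)−f^{tmm}(B)) + (1/4)(f^{mmm}(A)+f^{mmm}(B))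 − 90 f(C) − 48 f^m(C) + (9/8) f^{tt}(C) − (21/2) f^{mm}(C) + (1/4) f^{ttm}(C) − f^{mmm}(C). -/
open MvPolynomial

/-- Directional derivative of `f : ℝ² → ℝ` along the vector `u` at a point. -/
noncomputable def dirDeriv (u : ℝ × ℝ) (f : ℝ × ℝ → ℝ) : ℝ × ℝ → ℝ :=
  fun P => deriv (fun s : ℝ => f (P + s • u)) 0

/-- The polynomial counterpart of the directional derivative along `u`. -/
noncomputable def Dop (u : ℝ × ℝ) (F : MvPolynomial (Fin 2) ℝ) : MvPolynomial (Fin 2) ℝ :=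
  u.1 • pderiv 0 F + u.2 • pderiv 1 F

/-- Evaluation of a bivariate polynomial at a point of `ℝ × ℝ`. -/
noncomputable def Ev (P : ℝ × ℝ) (G : MvPolynomial (Fin 2) ℝ) : ℝ := eval ![P.1, P.2] G

lemma Dop_add (u : ℝ × ℝ) (p q : MvPolynomial (Fin 2) ℝ) :
    Dop u (p + q) = Dop u p + Dop u q := by
  simp [Dop, map_add, smul_add]; abel

lemma Dop_smul (u : ℝ × ℝ) (c : ℝ) (p : MvPolynomial (Fin 2) ℝ) :
    Dop u (c • p) = c • Dop u p := by
  simp [Dop, map_smul, smul_add, smul_comm c]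

lemma Dop_zero (u : ℝ × ℝ) : Dop u 0 = 0 := by simp [Dop]

lemma Ev_add (P : ℝ × ℝ) (p q : MvPolynomial (Fin 2) ℝ) : Ev P (p + q) = Ev P p + Ev P q := by
  simp [Ev]

lemma Ev_smul (P : ℝ × ℝ) (c : ℝ) (p : MvPolynomial (Fin 2) ℝ) : Ev P (c • p) = c * Ev P p := by
  simp [Ev, smul_eval]

lemma Ev_zero (P : ℝ × ℝ) : Ev P 0 = 0 := by simp [Ev]

lemma Ev_mono (P : ℝ × ℝ) (i j : ℕ) : Ev P (X 0 ^ i * X 1 ^ j) = P.1 ^ i * P.2 ^ j := by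
  simp [Ev]

lemma Dop_mono (u : ℝ × ℝ) (i j : ℕ) :
    Dop u (X 0 ^ i * X 1 ^ j) =
      ((i : ℝ) * u.1) • (X 0 ^ (i - 1) * X 1 ^ j)
        + ((j : ℝ) * u.2) • (X 0 ^ i * X 1 ^ (j - 1)) := by
  have h01 : (pderiv (0 : Fin 2)) (X (1 : Fin 2) : MvPolynomial (Fin 2) ℝ) = 0 :=
    pderiv_X_of_ne (by decide)
  have h10 : (pderiv (1 : Fin 2)) (X (0 : Fin 2) : MvPolynomial (Fin 2) ℝ) = 0 :=
    pderiv_X_of_ne (by decide)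
  simp only [Dop, pderiv_mul, pderiv_pow, pderiv_X_self, h01, h10, mul_one, mul_zero,
    zero_mul, add_zero, zero_add, smul_eq_C_mul, C_mul, C_eq_coe_nat]
  ring

lemma hasDerivAt_eval_line (F : MvPolynomial (Fin 2) ℝ) (v u : ℝ × ℝ) (s : ℝ) :
    HasDerivAt (fun s : ℝ => eval ![v.1 + s * u.1, v.2 + s * u.2] F)
      (eval ![v.1 + s * u.1, v.2 + s * u.2] (Dop u F)) s := by
  induction F using MvPolynomial.induction_on with
  | C a =>
      simpa [Dop] using hasDerivAt_const s (eval ![v.1 + s * u.1, v.2 + s * u.2] (C a) : ℝ)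
  | add p q hp hq =>
      simpa [Dop_add, eval_add] using hp.fun_add hq
  | mul_X p n hp =>
      fin_cases n <;> simp only [Fin.mk_zero, Fin.mk_one]
      · have hl : HasDerivAt (fun s : ℝ => v.1 + s * u.1) u.1 s :=
          (hasDerivAt_mul_const u.1).const_add v.1
        have h2 := hp.fun_mul hl
        have key : Dop u (p * X 0) = Dop u p * X 0 + u.1 • p := by
          simp [Dop, pderiv_mul, pderiv_X_self, pderiv_X_of_ne, smul_add, mul_add,
            mul_smul_comm, mul_comm]
          abel
        simp only [eval_mul, eval_X, Matrix.cons_val_zero, key, eval_add, smul_eval]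
        refine h2.congr_deriv ?_
        ring
      · have hl : HasDerivAt (fun s : ℝ => v.2 + s * u.2) u.2 s :=
          (hasDerivAt_mul_const u.2).const_add v.2
        have h2 := hp.fun_mul hl
        have key : Dop u (p * X 1) = Dop u p * X 1 + u.2 • p := by
          simp [Dop, pderiv_mul, pderiv_X_self, pderiv_X_of_ne, smul_add, mul_add,
            mul_smul_comm, mul_comm]
          abel
        simp only [eval_mul, eval_X, Matrix.cons_val_one, Matrix.head_cons, Matrix.cons_val_zero, key, eval_add,
          smul_eval]
        refine h2.congr_deriv ?_
        ring

lemma dirDeriv_eval (F : MvPolynomial (Fin 2) ℝ) (u : ℝ × ℝ) :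
    dirDeriv u (fun v : ℝ × ℝ => eval ![v.1, v.2] F) =
      fun P : ℝ × ℝ => eval ![P.1, P.2] (Dop u F) := by
  funext P
  have h := hasDerivAt_eval_line F P u 0
  have e : (fun s : ℝ => eval ![P.1 + s * u.1, P.2 + s * u.2] F) =
      fun s : ℝ => eval ![(P + s • u).1, (P + s • u).2] F := by
    funext s
    simp [Prod.fst_add, Prod.snd_add, smul_eq_mul, mul_comm]
  rw [e] at h
  simpa [dirDeriv] using h.deriv

/-- The subdivision-rule identity, phrased for polynomials in the frame `(M, t, m)`. -/
def Stmt (t m M : ℝ × ℝ) (F : MvPolynomial (Fin 2) ℝ) : Prop :=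
  Ev M (Dop m (Dop m (Dop m F))) =
      45 * (Ev (M - (1/2:ℝ) • t) F + Ev (M + (1/2:ℝ) • t) F)
      + 18 * (Ev (M - (1/2:ℝ) • t) (Dop t F) - Ev (M + (1/2:ℝ) • t) (Dop t F))
      - 21 * (Ev (M - (1/2:ℝ) • t) (Dop m F) + Ev (M + (1/2:ℝ) • t) (Dop m F))
      + (45/16) * (Ev (M - (1/2:ℝ) • t) (Dop t (Dop t F)) + Ev (M + (1/2:ℝ) • t) (Dop t (Dop t F)))
      - (63/8) * (Ev (M - (1/2:ℝ) • t) (Dop t (Dop m F)) - Ev (M + (1/2:ℝ) • t) (Dop t (Dop m F)))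
      + (15/4) * (Ev (M - (1/2:ℝ) • t) (Dop m (Dop m F)) + Ev (M + (1/2:ℝ) • t) (Dop m (Dop m F)))
      + (3/16) * (Ev (M - (1/2:ℝ) • t) (Dop t (Dop t (Dop t F)))
          - Ev (M + (1/2:ℝ) • t) (Dop t (Dop t (Dop t F))))
      - (7/8) * (Ev (M - (1/2:ℝ) • t) (Dop t (Dop t (Dop m F)))
          + Ev (M + (1/2:ℝ) • t) (Dop t (Dop t (Dop m F))))
      + (5/4) * (Ev (M - (1/2:ℝ) • t) (Dop t (Dop m (Dop m F)))
          - Ev (M + (1/2:ℝ) • t) (Dop t (Dop m (Dop m F))))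
      + (1/4) * (Ev (M - (1/2:ℝ) • t) (Dop m (Dop m (Dop m F)))
          + Ev (M + (1/2:ℝ) • t) (Dop m (Dop m (Dop m F))))
      - 90 * Ev (M - m) F - 48 * Ev (M - m) (Dop m F)
      + (9/8) * Ev (M - m) (Dop t (Dop t F))
      - (21/2) * Ev (M - m) (Dop m (Dop m F))
      + (1/4) * Ev (M - m) (Dop t (Dop t (Dop m F)))
      - Ev (M - m) (Dop m (Dop m (Dop m F)))

lemma Stmt_zero (t m M : ℝ × ℝ) : Stmt t m M 0 := by
  simp [Stmt, Dop_zero, Ev_zero]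

lemma Stmt_add {t m M : ℝ × ℝ} {p q : MvPolynomial (Fin 2) ℝ}
    (hp : Stmt t m M p) (hq : Stmt t m M q) : Stmt t m M (p + q) := by
  unfold Stmt at *
  simp only [Dop_add, Ev_add]
  linear_combination hp + hq

lemma Stmt_smul {t m M : ℝ × ℝ} (c : ℝ) {p : MvPolynomial (Fin 2) ℝ}
    (hp : Stmt t m M p) : Stmt t m M (c • p) := by
  unfold Stmt at *
  simp only [Dop_smul, Ev_smul]
  linear_combination c * hp

set_option maxHeartbeats 4000000 in
lemma Stmt_monomial (t m M : ℝ × ℝ) (i j : ℕ) (hij : i + j ≤ 5) :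
    Stmt t m M (X 0 ^ i * X 1 ^ j) := by
  have hi : i ≤ 5 := le_trans (Nat.le_add_right _ _) hij
  have hj : j ≤ 5 := le_trans (Nat.le_add_left _ _) hij
  interval_cases i <;> interval_cases j <;>
    first
      | (exfalso; omega)
      | (simp only [Stmt, Dop_mono, Dop_add, Dop_smul, Ev_add, Ev_smul, Ev_mono,
          Prod.fst_sub, Prod.snd_sub, Prod.fst_add, Prod.snd_add, Prod.smul_fst,
          Prod.smul_snd, smul_eq_mul, Nat.cast_ofNat, Nat.cast_one, Nat.cast_zero]
         norm_num
         try ring)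

lemma mono_eq (d : Fin 2 →₀ ℕ) :
    (monomial d (1:ℝ) : MvPolynomial (Fin 2) ℝ) = X 0 ^ (d 0) * X 1 ^ (d 1) := by
  have hd : ((fun₀ | (0 : Fin 2) => d 0) + fun₀ | (1 : Fin 2) => d 1) = d := by
    ext a
    fin_cases a <;> simp [Finsupp.add_apply, Finsupp.single_apply]
  rw [X_pow_eq_monomial, X_pow_eq_monomial, monomial_mul, one_mul, hd]

lemma Stmt_all (t m M : ℝ × ℝ) (F : MvPolynomial (Fin 2) ℝ) (hF : F.totalDegree ≤ 5) :
    Stmt t m M F := by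
  have h := F.as_sum
  rw [h]
  refine Finset.sum_induction _ _ (fun a b ha hb => Stmt_add ha hb) (Stmt_zero t m M) ?_
  intro d hd
  have hdeg : d 0 + d 1 ≤ 5 := by
    have h1 : (d.sum fun _ e => e) ≤ F.totalDegree := le_totalDegree hd
    have h2 : (d.sum fun _ e => e) = d 0 + d 1 := by
      rw [Finsupp.sum_fintype _ _ (fun _ => rfl), Fin.sum_univ_two]
    omega
  have : (monomial d (coeff d F) : MvPolynomial (Fin 2) ℝ) = coeff d F • monomial d 1 := by
    rw [smul_monomial, smul_eq_mul, mul_one]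
  rw [this, mono_eq]
  exact Stmt_smul _ (Stmt_monomial t m M (d 0) (d 1) hdeg)

theorem third_order_cross_boundary_midpoint_rule
    (f : ℝ × ℝ → ℝ) (F : MvPolynomial (Fin 2) ℝ) (hF : F.totalDegree ≤ 5)
    (hf : ∀ v : ℝ × ℝ, f v = MvPolynomial.eval ![v.1, v.2] F)
    (A B C : ℝ × ℝ) (t m M : ℝ × ℝ)
    (ht : t = B - A) (hm : m = (1/2 : ℝ) • (A + B) - C) (hM : M = (1/2 : ℝ) • (A + B)) :
    dirDeriv m (dirDeriv m (dirDeriv m f)) M =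
      45 * (f A + f B)
      + 18 * (dirDeriv t f A - dirDeriv t f B)
      - 21 * (dirDeriv m f A + dirDeriv m f B)
      + (45/16) * (dirDeriv t (dirDeriv t f) A + dirDeriv t (dirDeriv t f) B)
      - (63/8) * (dirDeriv t (dirDeriv m f) A - dirDeriv t (dirDeriv m f) B)
      + (15/4) * (dirDeriv m (dirDeriv m f) A + dirDeriv m (dirDeriv m f) B)
      + (3/16) * (dirDeriv t (dirDeriv t (dirDeriv t f)) A
          - dirDeriv t (dirDeriv t (dirDeriv t f)) B)
      - (7/8) * (dirDeriv t (dirDeriv t (dirDeriv m f)) A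
          + dirDeriv t (dirDeriv t (dirDeriv m f)) B)
      + (5/4) * (dirDeriv t (dirDeriv m (dirDeriv m f)) A
          - dirDeriv t (dirDeriv m (dirDeriv m f)) B)
      + (1/4) * (dirDeriv m (dirDeriv m (dirDeriv m f)) A
          + dirDeriv m (dirDeriv m (dirDeriv m f)) B)
      - 90 * f C - 48 * dirDeriv m f C
      + (9/8) * dirDeriv t (dirDeriv t f) C
      - (21/2) * dirDeriv m (dirDeriv m f) C
      + (1/4) * dirDeriv t (dirDeriv t (dirDeriv m f)) C
      - dirDeriv m (dirDeriv m (dirDeriv m f)) C := by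
  have hf' : f = fun v : ℝ × ℝ => eval ![v.1, v.2] F := funext hf
  subst hf'
  have hA : A = M - (1/2 : ℝ) • t := by
    rw [ht, hM]
    ext <;> simp [Prod.fst_add, Prod.snd_add, Prod.fst_sub, Prod.snd_sub] <;> ring
  have hB : B = M + (1/2 : ℝ) • t := by
    rw [ht, hM]
    ext <;> simp [Prod.fst_add, Prod.snd_add, Prod.fst_sub, Prod.snd_sub] <;> ring
  have hC : C = M - m := by
    rw [hm, hM]
    ext <;> simp
  rw [hA, hB, hC]
  simp only [dirDeriv_eval]
  have H := Stmt_all t m M F hF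
  unfold Stmt Ev at H
  exact H
end
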